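/- arXiv:1901.06542 — 9 statements merged into one kernel-verified Lean document; each statement's English description precedes it below -/
import Mathlib

section
/- Let \(\mathcal{A}=(Q,\Sigma,\delta)\) be a deterministic finite automaton with \(n=|Q|\) states, and let \(A\) and \(S\) be subsets of \(Q\) satisfying \(\varnothing\subsetneq A\subsetneq S\). Suppose there is a word \(w_{0}\in\Sigma^{*}\) such that \(A\nsubseteq S\cdot w_{0}\). Then there exists a word \(w\in\Sigma^{*}\) of length at most \(n-|A|\) satisfying either (1) \(A\nsubseteq S\cdot w\), or (2) \(|S\cdot w| < |S|\). -/
/-- The action of a word `w` on a state `q`: apply the transition function letter by letter. -/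
def wordAct {Q A : Type*} (δ : Q → A → Q) (q : Q) (w : List A) : Q := w.foldl δ q

/-- The image of a set of states `S` under a word `w`. -/
def wordImage {Q A : Type*} [DecidableEq Q] (δ : Q → A → Q) (S : Finset Q) (w : List A) :
    Finset Q :=
  S.image fun q => wordAct δ q w

/-- The rank of a word `w`: the cardinality of `Q ⋅ w`. -/
def wordRank {Q A : Type*} [Fintype Q] [DecidableEq Q] (δ : Q → A → Q) (w : List A) : ℕ :=
  (wordImage δ Finset.univ w).card

/-- An automaton is synchronizing if some word has rank one. -/
def IsSynchronizing {Q A : Type*} [Fintype Q] [DecidableEq Q] (δ : Q → A → Q) : Prop :=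
  ∃ w : List A, wordRank δ w = 1

/-- The reset threshold: the length of the shortest rank-one word. -/
noncomputable def resetThreshold {Q A : Type*} [Fintype Q] [DecidableEq Q]
    (δ : Q → A → Q) : ℕ :=
  sInf {l : ℕ | ∃ w : List A, w.length = l ∧ wordRank δ w = 1}

/-!
Record the image of `S` under a word `w` by its multiplicity vector `ψ_w = ∑_{s ∈ S} e_{s ⬝ w}`
in `ℚ^Q`; then `ψ_{wa}` is the push-forward of `ψ_w` along the letter `a`, a linear map. If no word
of length at most `n - |T|` is as required, each such `ψ_w` is a 0/1 vector with `|S|` ones,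
including all of `T`, so it lies in the subspace `{x | ∀ t ∈ T, x t = (∑ q, x q) / |S|}`, of
dimension at most `n - |T|` because `|T| ≠ |S|`. The spans of `{ψ_w | |w| ≤ k}` cannot grow
`n - |T| + 1` times inside it, and once they stop growing they never grow again; so every `ψ_w`
lies in the subspace, which fails for `w₀` since `ψ_{w₀}` vanishes at some `t ∈ T`.
-/

open Finset Module

section WordOrbit

variable {K V B : Type*} [Field K] [AddCommGroup V] [Module K V] (f : B → V →ₗ[K] V) (v : V)

def wordOrbit (w : List B) : V := w.foldl (fun x a => f a x) v

def wordOrbitSpan (k : ℕ) : Submodule K V :=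
  Submodule.span K (wordOrbit f v '' {w | w.length ≤ k})

variable {f v}

@[simp] lemma wordOrbit_append_singleton (w : List B) (a : B) :
    wordOrbit f v (w ++ [a]) = f a (wordOrbit f v w) := by
  simp [wordOrbit]

lemma wordOrbit_mem_wordOrbitSpan {w : List B} {k : ℕ} (hw : w.length ≤ k) :
    wordOrbit f v w ∈ wordOrbitSpan f v k :=
  Submodule.subset_span ⟨w, hw, rfl⟩

lemma wordOrbitSpan_mono : Monotone (wordOrbitSpan f v) := fun _ _ hkl =>
  Submodule.span_mono <| Set.image_mono fun _ hw => le_trans hw hkl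

lemma map_wordOrbitSpan_le (a : B) (k : ℕ) :
    (wordOrbitSpan f v k).map (f a) ≤ wordOrbitSpan f v (k + 1) := by
  rw [wordOrbitSpan, ← Submodule.span_image]
  refine Submodule.span_mono ?_
  rintro _ ⟨_, ⟨w, hw, rfl⟩, rfl⟩
  exact ⟨w ++ [a], by simpa using hw, wordOrbit_append_singleton w a⟩

lemma wordOrbitSpan_le_of_succ_le {k : ℕ} (h : wordOrbitSpan f v (k + 1) ≤ wordOrbitSpan f v k)
    (j : ℕ) : wordOrbitSpan f v j ≤ wordOrbitSpan f v k := by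
  induction j with
  | zero => exact wordOrbitSpan_mono (Nat.zero_le k)
  | succ j ih =>
    refine Submodule.span_le.mpr ?_
    rintro _ ⟨w, hw, rfl⟩
    induction w using List.reverseRecOn with
    | nil => exact wordOrbit_mem_wordOrbitSpan (Nat.zero_le k)
    | append_singleton u a _ =>
      have hu : u.length ≤ j := by simpa using hw
      rw [SetLike.mem_coe, wordOrbit_append_singleton]
      exact h (map_wordOrbitSpan_le a k
        (Submodule.mem_map_of_mem (ih (wordOrbit_mem_wordOrbitSpan hu))))

variable [FiniteDimensional K V]

lemma succ_le_finrank_wordOrbitSpan (hv : v ≠ 0) {k : ℕ}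
    (h : ∀ j < k, wordOrbitSpan f v j < wordOrbitSpan f v (j + 1)) :
    k + 1 ≤ finrank K (wordOrbitSpan f v k) := by
  induction k with
  | zero =>
    exact Submodule.one_le_finrank_iff.mpr <| (Submodule.ne_bot_iff _).mpr
      ⟨v, wordOrbit_mem_wordOrbitSpan (w := []) le_rfl, hv⟩
  | succ k ih =>
    have := Submodule.finrank_lt_finrank_of_lt (h k k.lt_succ_self)
    have := ih fun j hj => h j (hj.trans k.lt_succ_self)
    omega

theorem wordOrbit_mem_of_forall_length_le (hv : v ≠ 0) {L : Submodule K V}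
    (hL : ∀ w : List B, w.length ≤ finrank K L → wordOrbit f v w ∈ L) (w : List B) :
    wordOrbit f v w ∈ L := by
  have hspan : wordOrbitSpan f v (finrank K L) ≤ L := by
    refine Submodule.span_le.mpr ?_
    rintro _ ⟨u, hu, rfl⟩
    exact hL u hu
  by_cases hstable : ∃ j < finrank K L, wordOrbitSpan f v (j + 1) ≤ wordOrbitSpan f v j
  · obtain ⟨j, hj, hle⟩ := hstable
    exact hspan <| wordOrbitSpan_mono hj.le <|
      wordOrbitSpan_le_of_succ_le hle w.length (wordOrbit_mem_wordOrbitSpan le_rfl)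
  · push Not at hstable
    have hgrow := succ_le_finrank_wordOrbitSpan hv fun j hj =>
      lt_of_le_not_ge (wordOrbitSpan_mono j.le_succ) (hstable j hj)
    have := Submodule.finrank_mono hspan
    omega

end WordOrbit

section CoordEqMulSum

variable {Q : Type*} [Fintype Q]

def coordEqMulSum (c : ℚ) (T : Finset Q) : Submodule ℚ (Q →₀ ℚ) where
  carrier := {x | ∀ t ∈ T, x t = c * ∑ q, x q}
  add_mem' hx hy t ht := by simp [hx t ht, hy t ht, sum_add_distrib, mul_add]
  zero_mem' t _ := by simp
  smul_mem' a x hx t ht := by simp [hx t ht, ← mul_sum, mul_left_comm]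

lemma finrank_coordEqMulSum_le [DecidableEq Q] {c : ℚ} {T : Finset Q} (hc : (T.card : ℚ) * c ≠ 1) :
    finrank ℚ (coordEqMulSum c T) ≤ Fintype.card Q - T.card := by
  let restrict : coordEqMulSum c T →ₗ[ℚ] (↥(Tᶜ) → ℚ) :=
    LinearMap.funLeft ℚ ℚ (↑) ∘ₗ Finsupp.lcoeFun ∘ₗ (coordEqMulSum c T).subtype
  have hinj : Function.Injective restrict := by
    rw [← LinearMap.ker_eq_bot, LinearMap.ker_eq_bot']
    rintro ⟨x, hx⟩ hres
    have hout : ∀ q ∉ T, x q = 0 := fun q hq => congrFun hres ⟨q, mem_compl.mpr hq⟩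
    have hsum : ∑ q, x q = T.card * c * ∑ q, x q := calc
      ∑ q, x q = ∑ t ∈ T, x t := (sum_subset (subset_univ T) fun q _ hq => hout q hq).symm
      _ = ∑ t ∈ T, c * ∑ q, x q := sum_congr rfl hx
      _ = T.card * c * ∑ q, x q := by rw [sum_const, nsmul_eq_mul, mul_assoc]
    have hzero : ∑ q, x q = 0 := by
      have : (1 - T.card * c) * ∑ q, x q = 0 := by linear_combination hsum
      exact (mul_eq_zero.mp this).resolve_left (sub_ne_zero.mpr hc.symm)
    ext q
    by_cases hq : q ∈ T
    · simp [hx q hq, hzero]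
    · exact hout q hq
  calc finrank ℚ (coordEqMulSum c T) ≤ finrank ℚ (↥(Tᶜ) → ℚ) :=
        LinearMap.finrank_le_finrank_of_injective hinj
    _ = Fintype.card Q - T.card := by simp

end CoordEqMulSum

section Automaton

variable {Q B : Type*} (δ : Q → B → Q)

noncomputable def multiplicityVector (S : Finset Q) (w : List B) : Q →₀ ℚ :=
  ∑ s ∈ S, Finsupp.single (wordAct δ s w) 1

variable {δ}

lemma multiplicityVector_append_singleton (S : Finset Q) (w : List B) (a : B) :
    multiplicityVector δ S (w ++ [a]) = (multiplicityVector δ S w).mapDomain (δ · a) := by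
  simp [multiplicityVector, Finsupp.mapDomain_finsetSum, wordAct]

lemma wordOrbit_lmapDomain_multiplicityVector_nil (S : Finset Q) (w : List B) :
    wordOrbit (fun a => Finsupp.lmapDomain ℚ ℚ (δ · a)) (multiplicityVector δ S []) w =
      multiplicityVector δ S w := by
  induction w using List.reverseRecOn with
  | nil => rfl
  | append_singleton w a ih =>
    rw [wordOrbit_append_singleton, ih, multiplicityVector_append_singleton,
      Finsupp.lmapDomain_apply]

variable [DecidableEq Q]

lemma multiplicityVector_apply (S : Finset Q) (w : List B) (q : Q) :
    multiplicityVector δ S w q = #{s ∈ S | wordAct δ s w = q} := by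
  simp [multiplicityVector, Finsupp.finsetSum_apply, Finsupp.single_apply]

lemma multiplicityVector_apply_eq_zero {S : Finset Q} {w : List B} {q : Q}
    (hq : q ∉ wordImage δ S w) : multiplicityVector δ S w q = 0 := by
  rw [multiplicityVector_apply, Nat.cast_eq_zero, card_eq_zero, filter_eq_empty_iff]
  exact fun s hs hsq => hq (mem_image.mpr ⟨s, hs, hsq⟩)

lemma multiplicityVector_apply_eq_one {S : Finset Q} {w : List B} {q : Q}
    (hinj : S.card ≤ (wordImage δ S w).card) (hq : q ∈ wordImage δ S w) :
    multiplicityVector δ S w q = 1 := by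
  have hinjOn : Set.InjOn (wordAct δ · w) S :=
    card_image_iff.mp (le_antisymm card_image_le hinj)
  obtain ⟨s, hs, rfl⟩ := mem_image.mp hq
  rw [multiplicityVector_apply, Nat.cast_eq_one, card_eq_one]
  refine ⟨s, eq_singleton_iff_unique_mem.mpr ⟨mem_filter.mpr ⟨hs, rfl⟩, fun s' hs' => ?_⟩⟩
  obtain ⟨hs'S, hs's⟩ := mem_filter.mp hs'
  exact hinjOn hs'S hs hs's

variable [Fintype Q]

lemma sum_multiplicityVector (S : Finset Q) (w : List B) :
    ∑ q, multiplicityVector δ S w q = S.card := by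
  simp_rw [multiplicityVector_apply]
  exact_mod_cast (card_eq_sum_card_fiberwise fun s _ => mem_univ (wordAct δ s w)).symm

lemma multiplicityVector_ne_zero {S : Finset Q} (hS : S.Nonempty) (w : List B) :
    multiplicityVector δ S w ≠ 0 := by
  intro h
  have := sum_multiplicityVector (δ := δ) S w
  simp only [h, Finsupp.coe_zero, Pi.zero_apply, sum_const_zero] at this
  exact hS.card_pos.ne' (by exact_mod_cast this.symm)

lemma multiplicityVector_mem_coordEqMulSum {S T : Finset Q} {w : List B}
    (hT : T ⊆ wordImage δ S w) (hinj : S.card ≤ (wordImage δ S w).card) :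
    multiplicityVector δ S w ∈ coordEqMulSum (S.card : ℚ)⁻¹ T := by
  intro t ht
  obtain ⟨s, hs, -⟩ := mem_image.mp (hT ht)
  rw [multiplicityVector_apply_eq_one hinj (hT ht), sum_multiplicityVector,
    inv_mul_cancel₀ (by exact_mod_cast (card_pos.mpr ⟨s, hs⟩).ne')]

lemma multiplicityVector_notMem_coordEqMulSum {S T : Finset Q} {w : List B} (hS : S.Nonempty)
    (hT : ¬ T ⊆ wordImage δ S w) :
    multiplicityVector δ S w ∉ coordEqMulSum (S.card : ℚ)⁻¹ T := by
  intro hmem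
  obtain ⟨t, ht, htw⟩ := not_subset.mp hT
  have := hmem t ht
  rw [multiplicityVector_apply_eq_zero htw, sum_multiplicityVector,
    inv_mul_cancel₀ (by exact_mod_cast hS.card_pos.ne')] at this
  exact zero_ne_one this

end Automaton

theorem short_word_escaping_or_decreasing_general
    {Q A : Type*} [Fintype Q] [DecidableEq Q] (δ : Q → A → Q)
    (S T : Finset Q) (hsub : T ⊂ S)
    (h : ∃ w₀ : List A, ¬ T ⊆ wordImage δ S w₀) :
    ∃ w : List A, w.length ≤ Fintype.card Q - T.card ∧
      (¬ T ⊆ wordImage δ S w ∨ (wordImage δ S w).card < S.card) := by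
  obtain ⟨w₀, hw₀⟩ := h
  by_contra! hgood
  obtain ⟨s, hs, -⟩ := exists_of_ssubset hsub
  have hS : (S.card : ℚ) ≠ 0 := by exact_mod_cast (card_pos.mpr ⟨s, hs⟩).ne'
  have hdim : finrank ℚ (coordEqMulSum (S.card : ℚ)⁻¹ T) ≤ Fintype.card Q - T.card := by
    refine finrank_coordEqMulSum_le ?_
    rw [← div_eq_mul_inv, ne_eq, div_eq_one_iff_eq hS, Nat.cast_inj]
    exact (card_lt_card hsub).ne
  have hmem (w : List A) : multiplicityVector δ S w ∈ coordEqMulSum (S.card : ℚ)⁻¹ T := by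
    rw [← wordOrbit_lmapDomain_multiplicityVector_nil]
    apply wordOrbit_mem_of_forall_length_le (multiplicityVector_ne_zero ⟨s, hs⟩ [])
    intro w hw
    rw [wordOrbit_lmapDomain_multiplicityVector_nil]
    obtain ⟨hT, hinj⟩ := hgood w (hw.trans hdim)
    exact multiplicityVector_mem_coordEqMulSum hT hinj
  exact multiplicityVector_notMem_coordEqMulSum ⟨s, hs⟩ hw₀ (hmem w₀)

/-- Lemma 2 of Szykuła's paper: if `∅ ⊊ A ⊊ S` and some word maps `S` off `A`, then there is a
word of length at most `n - |A|` that either maps `S` off `A` or strictly decreases `|S|`. -/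
theorem short_word_escaping_or_decreasing
    {Q A : Type*} [Fintype Q] [DecidableEq Q] (δ : Q → A → Q)
    (S T : Finset Q) (hne : T.Nonempty) (hsub : T ⊂ S)
    (h : ∃ w₀ : List A, ¬ T ⊆ wordImage δ S w₀) :
    ∃ w : List A, w.length ≤ Fintype.card Q - T.card ∧
      (¬ T ⊆ wordImage δ S w ∨ (wordImage δ S w).card < S.card) :=
  short_word_escaping_or_decreasing_general δ S T hsub h
end

section
/- Let \(\mathcal{A}=(Q,\Sigma,\delta)\) be a synchronizing deterministic finite automaton with \(n=|Q|\) states, and let \(u\in\Sigma^{*}\) be a word of length \(l\) and corank \(r\) with \(r\le n-2\). Then there is a word of length at most \(l+(r+1)(r+2)/2\) and corank at least \(r+1\). -/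
/-!
Let `S = Q ⋅ u`, so `|S| = n - r ≥ 2`, and let `w = a₁ ⋯ aₘ` be a shortest word with `|S ⋅ w| < |S|`
(it exists because the automaton is synchronizing). For `i < m` the prefix `a₁ ⋯ aᵢ` maps `S`
bijectively onto `Sᵢ`, and the suffix `aᵢ₊₁ ⋯ aₘ` merges two states `pᵢ ≠ qᵢ` of `Sᵢ`. If `i < j`
and both `pⱼ, qⱼ ∈ Sᵢ`, then `a₁ ⋯ aᵢ aⱼ₊₁ ⋯ aₘ` would be a shorter word compressing `S`. So the
`2`-sets `{pᵢ, qᵢ}` and the `r`-sets `Bᵢ = Q ∖ Sᵢ` form a skew cross-intersecting family, and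
Frankl's theorem gives `m ≤ C(r + 2, 2)`.

Frankl's bound is proved by Lovász's exterior-algebra argument: put the states on the moment
curve in `ℝ^(r+2)`; the `r`-vectors `⋀ Bⱼ` and the functionals `ω ↦ det (pᵢ ∧ qᵢ ∧ ω)` then form a
triangular system with nonzero diagonal (Vandermonde), so the `⋀ Bⱼ` are independent in
`⋀ʳ ℝ^(r+2)`, a space of dimension `C(r + 2, 2)`.
-/

open Function Finset

theorem linearIndependent_of_dual_triangular {K V ι : Type*} [Field K] [AddCommGroup V]
    [Module K V] [LinearOrder ι] [Fintype ι] (v : ι → V) (f : ι → Module.Dual K V)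
    (h_lt : ∀ i j, j < i → f i (v j) = 0) (h_diag : ∀ i, f i (v i) ≠ 0) :
    LinearIndependent K v := by
  classical
  rw [Fintype.linearIndependent_iff]
  intro g hg
  by_contra! hne
  obtain ⟨i, hi, hmax⟩ := (univ.filter fun j => g j ≠ 0).exists_max_image id
    (let ⟨i, hi⟩ := hne; ⟨i, by simpa using hi⟩)
  simp only [mem_filter, mem_univ, true_and, id] at hi hmax
  have hsum : ∑ j, g j * f i (v j) = g i * f i (v i) := by
    refine sum_eq_single i (fun j _ hji => ?_) (by simp)
    rcases lt_or_gt_of_ne hji with hlt | hgt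
    · rw [h_lt i j hlt, mul_zero]
    · rw [not_not.mp (mt (hmax j) (not_le.mpr hgt)), zero_mul]
  have := congrArg (f i) hg
  simp only [map_sum, map_smul, smul_eq_mul, map_zero, hsum] at this
  exact mul_ne_zero hi (h_diag i) this

theorem detRowAlternating_moment_eq_zero_iff {K α : Type*} [Field K] {n : ℕ} {t : α → K}
    (ht : Injective t) (e : Fin n → α) :
    Matrix.detRowAlternating (fun i (k : Fin n) => t (e i) ^ (k : ℕ)) = 0 ↔ ¬ Injective e := by
  rw [← ht.of_comp_iff, ← Matrix.det_vandermonde_ne_zero_iff, not_not]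
  rfl

theorem injective_vecCons_vecCons_iff {α : Type*} {r : ℕ} {x y : α} {b : Fin r → α}
    (hb : Injective b) :
    Injective (Matrix.vecCons x (Matrix.vecCons y b)) ↔
      x ∉ Set.range b ∧ y ∉ Set.range b ∧ x ≠ y := by
  simp only [Matrix.vecCons, Fin.cons_injective_iff, Fin.range_cons, Set.mem_insert_iff, hb,
    and_true]
  tauto

/-- Frankl's skew version of Bollobás's theorem for pairs. -/
theorem card_le_choose_two_of_skew_cross {α ι : Type*} [Countable α] [LinearOrder ι]
    [Fintype ι] {r : ℕ} (p q : ι → α) (B : ι → Finset α) (hB : ∀ i, #(B i) = r)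
    (hp : ∀ i, p i ∉ B i) (hq : ∀ i, q i ∉ B i) (hpq : ∀ i, p i ≠ q i)
    (hcross : ∀ i j, i < j → p j ∈ B i ∨ q j ∈ B i) :
    Fintype.card ι ≤ (r + 2).choose 2 := by
  obtain ⟨t₀, ht₀⟩ := Countable.exists_injective_nat α
  set t : α → ℝ := fun a => t₀ a
  have ht : Injective t := Nat.cast_injective.comp ht₀
  set moment : α → Fin (r + 2) → ℝ := fun a k => t a ^ (k : ℕ)
  set b : ι → Fin r → α := fun i => Subtype.val ∘ ((B i).equivFinOfCardEq (hB i)).symm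
  have hb_inj : ∀ i, Injective (b i) := fun i =>
    Subtype.val_injective.comp ((B i).equivFinOfCardEq (hB i)).symm.injective
  have hb_range : ∀ i, Set.range (b i) = B i := fun i => by
    rw [Set.range_comp, Equiv.range_eq_univ, Set.image_univ, Subtype.range_coe]
  let w : ι → ⋀[ℝ]^r (Fin (r + 2) → ℝ) := fun j => exteriorPower.ιMulti ℝ r (moment ∘ b j)
  let ψ : ι → Module.Dual ℝ (⋀[ℝ]^r (Fin (r + 2) → ℝ)) := fun i =>
    exteriorPower.alternatingMapLinearEquiv
      ((Matrix.detRowAlternating.curryLeft (moment (p i))).curryLeft (moment (q i)))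
  have hψw : ∀ i j,
      ψ i (w j) = 0 ↔ ¬ Injective (Matrix.vecCons (p i) (Matrix.vecCons (q i) (b j))) := by
    intro i j
    rw [← detRowAlternating_moment_eq_zero_iff ht]
    simp only [ψ, w, exteriorPower.alternatingMapLinearEquiv_apply_ιMulti,
      AlternatingMap.curryLeft_apply_apply]
    change _ ↔ Matrix.detRowAlternating (moment ∘ _) = 0
    simp only [Matrix.vecCons, Fin.comp_cons]
  have hw : LinearIndependent ℝ w := by
    refine linearIndependent_of_dual_triangular w ψ (fun i j hji => ?_) (fun i => ?_)
    · rw [hψw, injective_vecCons_vecCons_iff (hb_inj j), hb_range]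
      have := hcross j i hji
      tauto
    · rw [Ne, hψw, injective_vecCons_vecCons_iff (hb_inj i), hb_range, not_not]
      exact ⟨hp i, hq i, hpq i⟩
  calc Fintype.card ι ≤ Module.finrank ℝ (⋀[ℝ]^r (Fin (r + 2) → ℝ)) :=
        hw.fintype_card_le_finrank
    _ = (r + 2).choose 2 := by
      rw [exteriorPower.finrank_eq, Module.finrank_fin_fun, Nat.choose_symm_add]

section Automaton

variable {Q A : Type*} (δ : Q → A → Q)

@[simp]
theorem wordAct_append (q : Q) (w₁ w₂ : List A) :
    wordAct δ q (w₁ ++ w₂) = wordAct δ (wordAct δ q w₁) w₂ :=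
  List.foldl_append

variable [DecidableEq Q]

theorem wordImage_append (S : Finset Q) (w₁ w₂ : List A) :
    wordImage δ S (w₁ ++ w₂) = wordImage δ (wordImage δ S w₁) w₂ := by
  simp only [wordImage, image_image, comp_def, wordAct_append]

theorem card_wordImage_le (S : Finset Q) (w : List A) : #(wordImage δ S w) ≤ #S :=
  card_image_le

theorem card_wordImage_lt_iff {S : Finset Q} {w : List A} :
    #(wordImage δ S w) < #S ↔ ∃ p ∈ S, ∃ q ∈ S, p ≠ q ∧ wordAct δ p w = wordAct δ q w := by
  rw [(card_wordImage_le δ S w).lt_iff_ne, Ne, wordImage, card_image_iff, Set.InjOn]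
  push Not
  simp only [mem_coe]
  tauto

variable [Fintype Q] {δ}

theorem IsSynchronizing.exists_card_wordImage_lt (hsync : IsSynchronizing δ) {S : Finset Q}
    (hS : 2 ≤ #S) : ∃ w : List A, #(wordImage δ S w) < #S := by
  obtain ⟨w, hw⟩ := hsync
  refine ⟨w, lt_of_le_of_lt ?_ (hw ▸ hS : wordRank δ w < #S)⟩
  exact card_le_card (image_subset_image (subset_univ S))

theorem length_le_choose_of_shortest {S : Finset Q} {w : List A}
    (hw : #(wordImage δ S w) < #S)
    (hmin : ∀ v : List A, #(wordImage δ S v) < #S → w.length ≤ v.length) :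
    w.length ≤ (#Sᶜ + 2).choose 2 := by
  set S' : Fin w.length → Finset Q := fun i => wordImage δ S (w.take i)
  have hS' : ∀ i, #(S' i) = #S := fun i => (card_wordImage_le δ _ _).antisymm <|
    not_lt.mp fun h => by
      have := hmin _ h
      simp only [List.length_take] at this
      omega
  have hmerge : ∀ i : Fin w.length, ∃ p ∈ S' i, ∃ q ∈ S' i,
      p ≠ q ∧ wordAct δ p (w.drop i) = wordAct δ q (w.drop i) := fun i => by
    rw [← card_wordImage_lt_iff, ← wordImage_append, List.take_append_drop, hS']
    exact hw
  choose p hp q hq hpq hpq_eq using hmerge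
  have hcross : ∀ i j, i < j → p j ∈ (S' i)ᶜ ∨ q j ∈ (S' i)ᶜ := by
    intro i j hij
    simp only [mem_compl, ← not_and_or]
    rintro ⟨hpi, hqi⟩
    have hlt : #(wordImage δ S (w.take i ++ w.drop j)) < #S := by
      rw [wordImage_append, ← hS' i, card_wordImage_lt_iff]
      exact ⟨_, hpi, _, hqi, hpq j, hpq_eq j⟩
    have := hmin _ hlt
    simp only [List.length_append, List.length_take, List.length_drop] at this
    have hj := j.isLt
    have hij : (i : ℕ) < j := hij
    omega
  simpa using card_le_choose_two_of_skew_cross p q (fun i => (S' i)ᶜ)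
    (fun i => by rw [card_compl, card_compl, hS']) (fun i => by simpa using hp i)
    (fun i => by simpa using hq i) hpq hcross

theorem IsSynchronizing.exists_short_card_wordImage_lt (hsync : IsSynchronizing δ)
    {S : Finset Q} (hS : 2 ≤ #S) :
    ∃ w : List A, w.length ≤ (#Sᶜ + 2).choose 2 ∧ #(wordImage δ S w) < #S := by
  classical
  have hex : ∃ n, ∃ w : List A, w.length = n ∧ #(wordImage δ S w) < #S :=
    let ⟨w, hw⟩ := hsync.exists_card_wordImage_lt hS
    ⟨_, w, rfl, hw⟩
  obtain ⟨w, hw_len, hw⟩ := Nat.find_spec hex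
  refine ⟨w, length_le_choose_of_shortest hw fun v hv => ?_, hw⟩
  exact hw_len ▸ Nat.find_min' hex ⟨v, rfl, hv⟩

end Automaton

/-- The Pin–Frankl theorem: if `u` has length `l` and corank `r ≤ n - 2`, then there is a word of
length at most `l + (r+1)(r+2)/2` and corank at least `r + 1`. -/
theorem pin_frankl_step
    {Q A : Type*} [Fintype Q] [DecidableEq Q] (δ : Q → A → Q)
    (hsync : IsSynchronizing δ)
    (u : List A) (l r : ℕ) (hlen : u.length = l)
    (hcorank : wordRank δ u + r = Fintype.card Q)
    (hr : r + 2 ≤ Fintype.card Q) :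
    ∃ w : List A, w.length ≤ l + (r + 1) * (r + 2) / 2 ∧
      wordRank δ w + (r + 1) ≤ Fintype.card Q := by
  set S := wordImage δ univ u
  have hS : #S + r = Fintype.card Q := hcorank
  have hSc : #Sᶜ = r := by
    rw [card_compl]
    omega
  obtain ⟨w, hw_len, hw⟩ := hsync.exists_short_card_wordImage_lt (S := S) (by omega)
  refine ⟨u ++ w, ?_, ?_⟩
  · have hchoose : (r + 2).choose 2 = (r + 1) * (r + 2) / 2 := by
      rw [Nat.choose_two_right, mul_comm]
      rfl
    rw [hSc, hchoose] at hw_len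
    rw [List.length_append, hlen]
    omega
  · have hrank : wordRank δ (u ++ w) = #(wordImage δ S w) := by
      rw [wordRank, wordImage_append]
    omega
end

section
/- There exists an absolute constant \(C>0\) such that the following holds. Let \(n\) and \(\rho\) be positive integers with \(\rho< n/2\), let \(k=\lfloor n/2\rfloor\), and let \(s_{1},\ldots,s_{k}\) be nonnegative real numbers with \(s_{1}+\cdots+s_{k}\le\rho\). Then \(\varphi(s_{1},\ldots,s_{k}):=\sum_{r=\rho}^{k}\min\left\{\frac{r^{2}}{4},\ 1\,s_{1}+2\,s_{2}+\cdots+r\,s_{r}\right\}\le \frac{15625\, n^{3}}{1597536} + C\, n^{2}(\log n + 1)\). -/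
set_option maxHeartbeats 1000000
set_option maxRecDepth 8000

/-- The function `φ(s₁, …, s_k) = ∑_{r=ρ}^{k} min{r²/4, ∑_{i=1}^{r} i·sᵢ}`. -/
noncomputable def phi (ρ k : ℕ) (s : ℕ → ℝ) : ℝ :=
  ∑ r ∈ Finset.Icc ρ k, min ((r : ℝ) ^ 2 / 4) (∑ i ∈ Finset.Icc 1 r, (i : ℝ) * s i)

namespace PhiUpperBoundAux

open Finset


lemma tele_sq (ρ b : ℕ) (hb : ρ ≤ b) :
    ∑ r ∈ Icc ρ b, ((r : ℝ) ^ 2) ≤ (((b : ℝ) + 1) ^ 3 - (ρ : ℝ) ^ 3) / 3 := by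
  induction b, hb using Nat.le_induction with
  | base =>
    rw [Icc_self, sum_singleton]
    have : (0:ℝ) ≤ (ρ:ℝ) := Nat.cast_nonneg _
    nlinarith
  | succ b hb ih =>
    rw [Finset.sum_Icc_succ_top (by omega : ρ ≤ b + 1)]
    have hb0 : (0:ℝ) ≤ (b:ℝ) := Nat.cast_nonneg _
    push_cast
    push_cast at ih
    nlinarith

lemma tele_inv (m b : ℕ) (hm : 2 ≤ m) (hb : m ≤ b) :
    ∑ r ∈ Icc m b, (1:ℝ) / (r : ℝ) ^ 2 ≤ 1 / ((m : ℝ) - 1) - 1 / (b : ℝ) := by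
  induction b, hb using Nat.le_induction with
  | base =>
    rw [Icc_self, sum_singleton]
    have hm2 : (2:ℝ) ≤ (m:ℝ) := by exact_mod_cast hm
    have h1 : (0:ℝ) < (m:ℝ) - 1 := by linarith
    have h2 : (0:ℝ) < (m:ℝ) := by linarith
    rw [div_sub_div _ _ (ne_of_gt h1) (ne_of_gt h2), div_le_div_iff₀ (by positivity) (by positivity)]
    ring_nf
    nlinarith
  | succ b hb ih =>
    rw [Finset.sum_Icc_succ_top (by omega : m ≤ b + 1)]
    have hm2 : (2:ℝ) ≤ (m:ℝ) := by exact_mod_cast hm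
    have hb2 : (2:ℝ) ≤ (b:ℝ) := by exact_mod_cast le_trans hm hb
    have key : (1:ℝ) / ((b:ℝ)+1) ^ 2 ≤ 1 / (b:ℝ) - 1 / ((b:ℝ)+1) := by
      rw [div_sub_div _ _ (by positivity) (by positivity), div_le_div_iff₀ (by positivity) (by positivity)]
      ring_nf
      nlinarith
    push_cast
    push_cast at ih key
    linarith

/-- Interchange of summation. -/
lemma swap_sum (ρ k : ℕ) (w s : ℕ → ℝ) :
    ∑ r ∈ Icc ρ k, w r * (∑ i ∈ Icc 1 r, (i : ℝ) * s i)
      = ∑ i ∈ Icc 1 k, ((i : ℝ) * s i) * (∑ r ∈ Icc (max i ρ) k, w r) := by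
  have h1 : ∀ r ∈ Icc ρ k, w r * (∑ i ∈ Icc 1 r, (i : ℝ) * s i)
      = ∑ i ∈ Icc 1 k, (if i ≤ r then w r * ((i : ℝ) * s i) else 0) := by
    intro r hr
    have hrk : r ≤ k := (mem_Icc.mp hr).2
    rw [Finset.mul_sum]
    rw [show Finset.Icc 1 r = (Finset.Icc 1 k).filter (fun i => i ≤ r) by
      ext i; simp only [Finset.mem_Icc, Finset.mem_filter]; omega]
    rw [Finset.sum_filter]
  rw [Finset.sum_congr rfl h1, Finset.sum_comm]
  refine Finset.sum_congr rfl fun i _ => ?_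
  rw [show Finset.Icc (max i ρ) k = (Finset.Icc ρ k).filter (fun r => i ≤ r) by
    ext r; simp only [Finset.mem_Icc, Finset.mem_filter]; omega]
  rw [Finset.sum_filter, Finset.mul_sum]
  refine Finset.sum_congr rfl fun r _ => ?_
  split_ifs <;> ring


/-- The key weight bound, for each `i`. -/
lemma per_i (ρ b k i : ℕ) (c : ℝ)
    (hρ2 : 2 ≤ ρ) (hρb : ρ ≤ b) (hbk : b ≤ k) (hk2b : k ≤ 2 * b)
    (hc0 : 0 ≤ c) (hcρ : c ≤ (ρ : ℝ) ^ 2) (hbc : (b : ℝ) * ((k : ℝ) - (b : ℝ)) ≤ c)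
    (hi1 : 1 ≤ i) (hik : i ≤ k) :
    (i : ℝ) * (∑ r ∈ Icc (max i ρ) k, (if r ≤ b then c / (r : ℝ) ^ 2 else 1))
      ≤ c + 2 * (k : ℝ) := by
  set m : ℕ := max i ρ with hm
  have hm2 : 2 ≤ m := le_trans hρ2 (le_max_right _ _)
  have hmk : m ≤ k := max_le hik (le_trans hρb hbk)
  have hmR : (2:ℝ) ≤ (m:ℝ) := by exact_mod_cast hm2
  have hkR : (m:ℝ) ≤ (k:ℝ) := by exact_mod_cast hmk
  have him : (i:ℝ) ≤ (m:ℝ) := by exact_mod_cast le_max_left i ρ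
  have hi0 : (0:ℝ) ≤ (i:ℝ) := Nat.cast_nonneg _
  by_cases hib : i ≤ b
  · have hmb : m ≤ b := max_le hib hρb
    have hbpos : (0:ℝ) < (b:ℝ) := by exact_mod_cast (by omega : 0 < b)
    have hbkR : (b:ℝ) ≤ (k:ℝ) := by exact_mod_cast hbk
    have hIcc : Icc m k = Icc m b ∪ Ioc b k := by
      ext r; simp only [mem_Icc, mem_Ioc, mem_union]; omega
    have hdisj : Disjoint (Icc m b) (Ioc b k) := by
      simp only [Finset.disjoint_left, mem_Icc, mem_Ioc]; omega
    have hsplit : (∑ r ∈ Icc m k, (if r ≤ b then c / (r : ℝ) ^ 2 else 1))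
        = (∑ r ∈ Icc m b, c / (r : ℝ) ^ 2) + ((k : ℝ) - (b : ℝ)) := by
      rw [hIcc, Finset.sum_union hdisj]
      congr 1
      · exact Finset.sum_congr rfl fun r hr => by simp [(mem_Icc.mp hr).2]
      · rw [Finset.sum_congr rfl (fun r hr => by simp [Nat.not_le.mpr (mem_Ioc.mp hr).1] :
          ∀ r ∈ Ioc b k, (if r ≤ b then c / (r : ℝ) ^ 2 else 1) = (1:ℝ))]
        rw [Finset.sum_const, Nat.card_Ioc, nsmul_eq_mul, mul_one, Nat.cast_sub hbk]
    rw [hsplit]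
    have htele : (∑ r ∈ Icc m b, c / (r : ℝ) ^ 2) ≤ c * (1 / ((m:ℝ) - 1) - 1 / (b:ℝ)) := by
      have h := tele_inv m b hm2 hmb
      calc (∑ r ∈ Icc m b, c / (r : ℝ) ^ 2) = c * ∑ r ∈ Icc m b, (1:ℝ) / (r : ℝ) ^ 2 := by
            rw [Finset.mul_sum]; exact Finset.sum_congr rfl fun r _ => by ring
        _ ≤ _ := mul_le_mul_of_nonneg_left h hc0
    have hcm : c ≤ (m:ℝ)^2 := le_trans hcρ (by
      have h1 : (ρ:ℝ) ≤ (m:ℝ) := by exact_mod_cast le_max_right i ρ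
      nlinarith [Nat.cast_nonneg (α := ℝ) ρ])
    have hm1 : (0:ℝ) < (m:ℝ) - 1 := by linarith
    have htele2 : (i:ℝ) * (∑ r ∈ Icc m b, c / (r : ℝ) ^ 2)
        ≤ (i:ℝ) * c / ((m:ℝ) - 1) - (i:ℝ) * c / (b:ℝ) := by
      calc (i:ℝ) * (∑ r ∈ Icc m b, c / (r : ℝ) ^ 2)
          ≤ (i:ℝ) * (c * (1 / ((m:ℝ) - 1) - 1 / (b:ℝ))) := mul_le_mul_of_nonneg_left htele hi0
        _ = (i:ℝ) * c / ((m:ℝ) - 1) - (i:ℝ) * c / (b:ℝ) := by ring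
    have e1 : (i:ℝ) * c / ((m:ℝ) - 1) ≤ c + 2 * (k:ℝ) := by
      rw [div_le_iff₀ hm1]
      nlinarith [mul_nonneg (by linarith : (0:ℝ) ≤ (m:ℝ) - (i:ℝ)) hc0,
        mul_nonneg (by linarith : (0:ℝ) ≤ (k:ℝ) - (m:ℝ)) (by linarith : (0:ℝ) ≤ (m:ℝ)),
        mul_nonneg (by linarith : (0:ℝ) ≤ (m:ℝ) - 2) (by linarith : (0:ℝ) ≤ (k:ℝ))]
    have e2 : (i:ℝ) * ((k:ℝ) - (b:ℝ)) ≤ (i:ℝ) * c / (b:ℝ) := by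
      rw [le_div_iff₀ hbpos]
      nlinarith [mul_le_mul_of_nonneg_left hbc hi0]
    rw [mul_add]
    linarith
  · have hmi : m = i := max_eq_left (by omega)
    have hsum1 : (∑ r ∈ Icc m k, (if r ≤ b then c / (r : ℝ) ^ 2 else 1))
        = (k : ℝ) + 1 - (i : ℝ) := by
      rw [Finset.sum_congr rfl (fun r hr => by
        have : b < r := by have := (mem_Icc.mp hr).1; omega
        simp [Nat.not_le.mpr this] : ∀ r ∈ Icc m k, (if r ≤ b then c / (r : ℝ) ^ 2 else 1) = 1)]
      rw [Finset.sum_const, Nat.card_Icc, nsmul_eq_mul, mul_one, hmi, Nat.cast_sub (by omega)]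
      push_cast; ring
    rw [hsum1]
    have hbi : (b:ℝ) + 1 ≤ (i:ℝ) := by exact_mod_cast (by omega : b + 1 ≤ i)
    have hikR : (i:ℝ) ≤ (k:ℝ) := by exact_mod_cast hik
    have h2b : (k:ℝ) ≤ 2 * (b:ℝ) := by exact_mod_cast hk2b
    nlinarith [mul_nonneg (by linarith : (0:ℝ) ≤ (i:ℝ) - (b:ℝ) - 1) (by linarith : (0:ℝ) ≤ (i:ℝ) + (b:ℝ) - (k:ℝ))]

/-- The master dual bound. -/
lemma master (ρ b k : ℕ) (c : ℝ) (s : ℕ → ℝ)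
    (hs : ∀ i ∈ Icc 1 k, 0 ≤ s i) (hsum : ∑ i ∈ Icc 1 k, s i ≤ (ρ : ℝ))
    (hρ2 : 2 ≤ ρ) (hρb : ρ ≤ b) (hbk : b ≤ k) (hk2b : k ≤ 2 * b)
    (hc0 : 0 ≤ c) (hcρ : c ≤ (ρ : ℝ) ^ 2) (hbc : (b : ℝ) * ((k : ℝ) - (b : ℝ)) ≤ c) :
    phi ρ k s ≤ (((b : ℝ) + 1) ^ 3 - (ρ : ℝ) ^ 3) / 12 - c * ((b : ℝ) - (ρ : ℝ) + 1) / 4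
      + (ρ : ℝ) * c + 2 * (ρ : ℝ) * (k : ℝ) := by
  set w : ℕ → ℝ := fun r => if r ≤ b then c / (r : ℝ) ^ 2 else 1 with hw
  -- Step A: termwise bound
  have stepA : phi ρ k s ≤ (∑ r ∈ Icc ρ k, (if r ≤ b then ((r : ℝ) ^ 2 - c) / 4 else 0))
      + ∑ r ∈ Icc ρ k, w r * (∑ i ∈ Icc 1 r, (i : ℝ) * s i) := by
    rw [phi, ← Finset.sum_add_distrib]
    refine Finset.sum_le_sum fun r hr => ?_
    set Sr := ∑ i ∈ Icc 1 r, (i : ℝ) * s i with hSr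
    have hrρ : ρ ≤ r := (mem_Icc.mp hr).1
    by_cases hrb : r ≤ b
    · have hr2 : (2:ℝ) ≤ (r : ℝ) := by exact_mod_cast le_trans hρ2 hrρ
      have hr0 : (0:ℝ) < (r : ℝ) ^ 2 := by positivity
      have hθ1 : c / (r : ℝ) ^ 2 ≤ 1 := by
        rw [div_le_one hr0]
        have h1 : (ρ : ℝ) ≤ (r : ℝ) := by exact_mod_cast hrρ
        nlinarith [Nat.cast_nonneg (α := ℝ) ρ]
      have hθ0 : 0 ≤ c / (r : ℝ) ^ 2 := by positivity
      have h1 : min ((r : ℝ) ^ 2 / 4) Sr ≤ (r : ℝ) ^ 2 / 4 := min_le_left _ _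
      have h2 : min ((r : ℝ) ^ 2 / 4) Sr ≤ Sr := min_le_right _ _
      have key : min ((r : ℝ) ^ 2 / 4) Sr
          ≤ (1 - c / (r : ℝ) ^ 2) * ((r : ℝ) ^ 2 / 4) + (c / (r : ℝ) ^ 2) * Sr := by
        nlinarith [mul_le_mul_of_nonneg_left h1 (by linarith : (0:ℝ) ≤ 1 - c / (r : ℝ) ^ 2),
          mul_le_mul_of_nonneg_left h2 hθ0]
      have heq : (1 - c / (r : ℝ) ^ 2) * ((r : ℝ) ^ 2 / 4) = ((r : ℝ) ^ 2 - c) / 4 := by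
        field_simp
      simp only [hw, hrb, if_true]
      rw [heq] at key
      exact key
    · simp only [hw, hrb, if_false]
      simpa using min_le_right ((r : ℝ) ^ 2 / 4) Sr
  -- Step E: the first sum
  have stepE : (∑ r ∈ Icc ρ k, (if r ≤ b then ((r : ℝ) ^ 2 - c) / 4 else 0))
      ≤ (((b : ℝ) + 1) ^ 3 - (ρ : ℝ) ^ 3) / 12 - c * ((b : ℝ) - (ρ : ℝ) + 1) / 4 := by
    have hfil : (∑ r ∈ Icc ρ k, (if r ≤ b then ((r : ℝ) ^ 2 - c) / 4 else 0))
        = ∑ r ∈ Icc ρ b, ((r : ℝ) ^ 2 - c) / 4 := by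
      rw [show Finset.Icc ρ b = (Finset.Icc ρ k).filter (fun r => r ≤ b) by
        ext r; simp only [Finset.mem_Icc, Finset.mem_filter]; omega]
      rw [Finset.sum_filter]
    rw [hfil]
    have hcard : ((Icc ρ b).card : ℝ) = (b : ℝ) - (ρ : ℝ) + 1 := by
      rw [Nat.card_Icc, Nat.cast_sub (by omega)]
      push_cast; ring
    have hsq := tele_sq ρ b hρb
    have h1 : ∑ r ∈ Icc ρ b, ((r : ℝ) ^ 2 - c) / 4
        = (∑ r ∈ Icc ρ b, ((r : ℝ) ^ 2 / 4 - c / 4)) :=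
      Finset.sum_congr rfl fun r _ => by ring
    rw [h1, Finset.sum_sub_distrib, Finset.sum_const, nsmul_eq_mul, ← Finset.sum_div, hcard]
    linarith
  -- Steps B–D: the second sum
  have stepB : (∑ r ∈ Icc ρ k, w r * (∑ i ∈ Icc 1 r, (i : ℝ) * s i))
      ≤ (ρ : ℝ) * c + 2 * (ρ : ℝ) * (k : ℝ) := by
    rw [swap_sum]
    have hck : 0 ≤ c + 2 * (k : ℝ) := by positivity
    calc ∑ i ∈ Icc 1 k, ((i : ℝ) * s i) * (∑ r ∈ Icc (max i ρ) k, w r)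
        ≤ ∑ i ∈ Icc 1 k, s i * (c + 2 * (k : ℝ)) := by
          refine Finset.sum_le_sum fun i hi => ?_
          have hi1 : 1 ≤ i := (mem_Icc.mp hi).1
          have hik : i ≤ k := (mem_Icc.mp hi).2
          have hper := per_i ρ b k i c hρ2 hρb hbk hk2b hc0 hcρ hbc hi1 hik
          have hsi := hs i hi
          calc ((i : ℝ) * s i) * (∑ r ∈ Icc (max i ρ) k, w r)
              = s i * ((i : ℝ) * (∑ r ∈ Icc (max i ρ) k, w r)) := by ring
            _ ≤ s i * (c + 2 * (k : ℝ)) := mul_le_mul_of_nonneg_left hper hsi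
      _ = (∑ i ∈ Icc 1 k, s i) * (c + 2 * (k : ℝ)) := by rw [Finset.sum_mul]
      _ ≤ (ρ : ℝ) * (c + 2 * (k : ℝ)) := mul_le_mul_of_nonneg_right hsum hck
      _ = (ρ : ℝ) * c + 2 * (ρ : ℝ) * (k : ℝ) := by ring
  linarith


/-- The trivial bound `φ ≤ ρ (k+1)²/4`. -/
lemma phi_le_triv (ρ k : ℕ) (s : ℕ → ℝ)
    (hs : ∀ i ∈ Icc 1 k, 0 ≤ s i) (hsum : ∑ i ∈ Icc 1 k, s i ≤ (ρ : ℝ))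
    (hρk : ρ ≤ k) :
    phi ρ k s ≤ (ρ : ℝ) * ((k : ℝ) + 1) ^ 2 / 4 := by
  have h1 : phi ρ k s ≤ ∑ r ∈ Icc ρ k, (fun _ => (1:ℝ)) r * (∑ i ∈ Icc 1 r, (i : ℝ) * s i) := by
    rw [phi]
    refine Finset.sum_le_sum fun r _ => ?_
    simpa using min_le_right ((r : ℝ) ^ 2 / 4) _
  rw [swap_sum] at h1
  have h2 : ∑ i ∈ Icc 1 k, ((i : ℝ) * s i) * (∑ r ∈ Icc (max i ρ) k, (1:ℝ))
      ≤ ∑ i ∈ Icc 1 k, s i * (((k : ℝ) + 1) ^ 2 / 4) := by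
    refine Finset.sum_le_sum fun i hi => ?_
    have hi1 : 1 ≤ i := (mem_Icc.mp hi).1
    have hik : i ≤ k := (mem_Icc.mp hi).2
    have hm : max i ρ ≤ k := max_le hik hρk
    have hcard : (∑ r ∈ Icc (max i ρ) k, (1:ℝ)) = ((k + 1 - max i ρ : ℕ) : ℝ) := by
      rw [Finset.sum_const, Nat.card_Icc, nsmul_eq_mul, mul_one]
    have hcard2 : ((k + 1 - max i ρ : ℕ) : ℝ) ≤ (k : ℝ) + 1 - (i : ℝ) := by
      calc ((k + 1 - max i ρ : ℕ) : ℝ) ≤ ((k + 1 - i : ℕ) : ℝ) := by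
            exact_mod_cast Nat.sub_le_sub_left (le_max_left i ρ) (k + 1)
        _ = (k : ℝ) + 1 - (i : ℝ) := by
            rw [Nat.cast_sub (by omega)]; push_cast; ring
    have hiR : (1:ℝ) ≤ (i:ℝ) := by exact_mod_cast hi1
    have hikR : (i:ℝ) ≤ (k:ℝ) := by exact_mod_cast hik
    have key : (i : ℝ) * (∑ r ∈ Icc (max i ρ) k, (1:ℝ)) ≤ ((k : ℝ) + 1) ^ 2 / 4 := by
      rw [hcard]
      nlinarith [sq_nonneg ((k:ℝ) + 1 - 2 * (i:ℝ)), Nat.cast_nonneg (α := ℝ) (k + 1 - max i ρ)]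
    calc ((i : ℝ) * s i) * (∑ r ∈ Icc (max i ρ) k, (1:ℝ))
        = s i * ((i : ℝ) * (∑ r ∈ Icc (max i ρ) k, (1:ℝ))) := by ring
      _ ≤ s i * (((k : ℝ) + 1) ^ 2 / 4) := mul_le_mul_of_nonneg_left key (hs i hi)
  calc phi ρ k s ≤ _ := h1
    _ ≤ ∑ i ∈ Icc 1 k, s i * (((k : ℝ) + 1) ^ 2 / 4) := h2
    _ = (∑ i ∈ Icc 1 k, s i) * (((k : ℝ) + 1) ^ 2 / 4) := by rw [Finset.sum_mul]
    _ ≤ (ρ : ℝ) * (((k : ℝ) + 1) ^ 2 / 4) := mul_le_mul_of_nonneg_right hsum (by positivity)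
    _ = (ρ : ℝ) * ((k : ℝ) + 1) ^ 2 / 4 := by ring

/-- Main estimate for `k ≥ 100`. -/
lemma main_est (ρ k : ℕ) (s : ℕ → ℝ)
    (hs : ∀ i ∈ Icc 1 k, 0 ≤ s i) (hsum : ∑ i ∈ Icc 1 k, s i ≤ (ρ : ℝ))
    (hρ1 : 1 ≤ ρ) (hρk : ρ ≤ k) (hk : 100 ≤ k) :
    phi ρ k s ≤ (15625 / 199692) * (k : ℝ) ^ 3 + 5 * (k : ℝ) ^ 2 := by
  have hkR : (100:ℝ) ≤ (k:ℝ) := by exact_mod_cast hk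
  have hρR : (1:ℝ) ≤ (ρ:ℝ) := by exact_mod_cast hρ1
  have hρkR : (ρ:ℝ) ≤ (k:ℝ) := by exact_mod_cast hρk
  rcases le_or_gt (16 * ρ) (5 * k) with hR1 | hR2a
  · -- Region 1 : ρ ≤ 5k/16, trivial bound
    have h := phi_le_triv ρ k s hs hsum hρk
    have hR1R : 16 * (ρ:ℝ) ≤ 5 * (k:ℝ) := by exact_mod_cast hR1
    nlinarith [mul_nonneg (by linarith : (0:ℝ) ≤ 5 * (k:ℝ) - 16 * (ρ:ℝ))
      (sq_nonneg ((k:ℝ) + 1)), sq_nonneg ((k:ℝ) + 1)]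
  have hR2aR : 5 * (k:ℝ) + 1 ≤ 16 * (ρ:ℝ) := by exact_mod_cast hR2a
  have hρ2 : 2 ≤ ρ := by omega
  rcases le_or_gt (29 * ρ) (10 * k + 9) with hR2b | hR3
  · -- Region 2 : the interpolating strip, b ≈ (11129/12500) k
    obtain ⟨b, hd1, hd2⟩ : ∃ b : ℕ, 11129 * k < 12500 * b ∧ 12500 * b ≤ 11129 * k + 12500 :=
      ⟨11129 * k / 12500 + 1, by omega, by omega⟩
    have hρb : ρ ≤ b := by omega
    have hbk : b ≤ k := by omega
    have hk2b : k ≤ 2 * b := by omega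
    have hd1R : 11129 * (k:ℝ) ≤ 12500 * (b:ℝ) := by exact_mod_cast hd1.le
    have hd2R : 12500 * (b:ℝ) ≤ 11129 * (k:ℝ) + 12500 := by exact_mod_cast hd2
    have hbkR : (b:ℝ) ≤ (k:ℝ) := by exact_mod_cast hbk
    set c : ℝ := (b:ℝ) * ((k:ℝ) - (b:ℝ)) with hc
    have hc0 : 0 ≤ c := by
      apply mul_nonneg (Nat.cast_nonneg _); linarith
    have hkey : 0 ≤ (12500 * (b:ℝ) - 11129 * (k:ℝ)) * ((12500 * (b:ℝ) + 11129 * (k:ℝ)) - 12500 * (k:ℝ)) :=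
      mul_nonneg (by linarith) (by linarith)
    have hc_up : c ≤ (15257859 / 156250000) * (k:ℝ) ^ 2 := by nlinarith [hkey]
    have hcρ : c ≤ (ρ:ℝ) ^ 2 := by nlinarith [hc_up, sq_nonneg (5 * (k:ℝ) + 1 - 16 * (ρ:ℝ))]
    have hmaster := master ρ b k c s hs hsum hρ2 hρb hbk hk2b hc0 hcρ le_rfl
    -- value chain
    have hcoef_nn : 0 ≤ (ρ:ℝ) - ((b:ℝ) - (ρ:ℝ) + 1) / 4 := by linarith
    have hcoef_up : (ρ:ℝ) - ((b:ℝ) - (ρ:ℝ) + 1) / 4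
        ≤ (ρ:ℝ) - ((11129 / 12500) * (k:ℝ) - (ρ:ℝ)) / 4 := by linarith
    have hprod : c * ((ρ:ℝ) - ((b:ℝ) - (ρ:ℝ) + 1) / 4)
        ≤ ((15257859 / 156250000) * (k:ℝ) ^ 2) * ((ρ:ℝ) - ((11129 / 12500) * (k:ℝ) - (ρ:ℝ)) / 4) :=
      mul_le_mul hc_up hcoef_up hcoef_nn (by positivity)
    have hb3 : ((b:ℝ) + 1) ^ 3 ≤ ((11129 / 12500) * (k:ℝ) + 2) ^ 3 := by
      apply pow_le_pow_left₀ (by positivity) (by linarith)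
    have hR2bR : 29 * (ρ:ℝ) ≤ 10 * (k:ℝ) + 9 := by exact_mod_cast hR2b
    nlinarith [hmaster, hprod, hb3, mul_nonneg (by linarith : (0:ℝ) ≤ 10 * (k:ℝ) + 9 - 29 * (ρ:ℝ))
      (by positivity : (0:ℝ) ≤ (k:ℝ)^2),
      mul_nonneg (by linarith : (0:ℝ) ≤ 16 * (ρ:ℝ) - 5 * (k:ℝ) - 1) (by positivity : (0:ℝ) ≤ (k:ℝ)^2),
      mul_nonneg (mul_nonneg (by linarith : (0:ℝ) ≤ 10 * (k:ℝ) + 9 - 29 * (ρ:ℝ))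
        (by linarith : (0:ℝ) ≤ 16 * (ρ:ℝ) - 5 * (k:ℝ) - 1)) (by positivity : (0:ℝ) ≤ (k:ℝ)),
      sq_nonneg ((k:ℝ) - 100), mul_nonneg (by linarith : (0:ℝ) ≤ (k:ℝ) - 100) (by positivity : (0:ℝ) ≤ (k:ℝ)^2)]
  rcases le_or_gt (5 * ρ) (2 * k) with hR3a | hR3b
  · -- Region 3a : b = ⌊5ρ/2⌋
    obtain ⟨b, hd1, hd2⟩ : ∃ b : ℕ, 5 * ρ ≤ 2 * b + 1 ∧ 2 * b ≤ 5 * ρ :=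
      ⟨5 * ρ / 2, by omega, by omega⟩
    have hρb : ρ ≤ b := by omega
    have hbk : b ≤ k := by omega
    have hk2b : k ≤ 2 * b := by omega
    have hd1R : 5 * (ρ:ℝ) ≤ 2 * (b:ℝ) + 1 := by exact_mod_cast hd1
    have hd2R : 2 * (b:ℝ) ≤ 5 * (ρ:ℝ) := by exact_mod_cast hd2
    have hbkR : (b:ℝ) ≤ (k:ℝ) := by exact_mod_cast hbk
    have hR3R : 10 * (k:ℝ) + 10 ≤ 29 * (ρ:ℝ) := by exact_mod_cast (by omega : 10 * k + 10 ≤ 29 * ρ)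
    have hR3aR : 5 * (ρ:ℝ) ≤ 2 * (k:ℝ) := by exact_mod_cast hR3a
    set c : ℝ := (b:ℝ) * ((k:ℝ) - (b:ℝ)) with hc
    have hc0 : 0 ≤ c := mul_nonneg (Nat.cast_nonneg _) (by linarith)
    have hkey : 0 ≤ (2 * (b:ℝ) - (5 * (ρ:ℝ) - 1)) * ((2 * (b:ℝ) + (5 * (ρ:ℝ) - 1)) - 2 * (k:ℝ)) :=
      mul_nonneg (by linarith) (by linarith)
    have hc_up : c ≤ (5 * (ρ:ℝ) - 1) * (2 * (k:ℝ) - 5 * (ρ:ℝ) + 1) / 4 := by nlinarith [hkey]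
    have hcρ : c ≤ (ρ:ℝ) ^ 2 := by
      nlinarith [hc_up, mul_nonneg (by linarith : (0:ℝ) ≤ (ρ:ℝ))
        (by linarith : (0:ℝ) ≤ 29 * (ρ:ℝ) - 10 * (k:ℝ) - 10)]
    have hmaster := master ρ b k c s hs hsum hρ2 hρb hbk hk2b hc0 hcρ le_rfl
    have hcoef_nn : 0 ≤ (ρ:ℝ) - ((b:ℝ) - (ρ:ℝ) + 1) / 4 := by linarith
    have hcoef_up : (ρ:ℝ) - ((b:ℝ) - (ρ:ℝ) + 1) / 4 ≤ (5 * (ρ:ℝ) - 1) / 8 := by linarith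
    have hcup_nn : (0:ℝ) ≤ (5 * (ρ:ℝ) - 1) * (2 * (k:ℝ) - 5 * (ρ:ℝ) + 1) / 4 := by
      apply div_nonneg (mul_nonneg (by linarith) (by linarith)) (by norm_num)
    have hprod : c * ((ρ:ℝ) - ((b:ℝ) - (ρ:ℝ) + 1) / 4)
        ≤ ((5 * (ρ:ℝ) - 1) * (2 * (k:ℝ) - 5 * (ρ:ℝ) + 1) / 4) * ((5 * (ρ:ℝ) - 1) / 8) :=
      mul_le_mul hc_up hcoef_up hcoef_nn hcup_nn
    have hb3 : ((b:ℝ) + 1) ^ 3 ≤ ((5 * (ρ:ℝ) + 2) / 2) ^ 3 := by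
      apply pow_le_pow_left₀ (by positivity) (by linarith)
    nlinarith [hmaster, hprod, hb3,
      mul_nonneg (sq_nonneg (129 * (ρ:ℝ) - 50 * (k:ℝ))) (by linarith : (0:ℝ) ≤ 129 * (ρ:ℝ) + 25 * (k:ℝ)),
      mul_nonneg (by linarith : (0:ℝ) ≤ 2 * (k:ℝ) - 5 * (ρ:ℝ)) (by linarith : (0:ℝ) ≤ (k:ℝ)),
      mul_nonneg (by linarith : (0:ℝ) ≤ 2 * (k:ℝ) - 5 * (ρ:ℝ)) (by linarith : (0:ℝ) ≤ (ρ:ℝ)),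
      mul_nonneg (by linarith : (0:ℝ) ≤ (k:ℝ) - 100) (by positivity : (0:ℝ) ≤ (k:ℝ)),
      sq_nonneg ((k:ℝ) - 100)]
  · -- Region 3b : b = k, c = 0
    have hmaster := master ρ k k 0 s hs hsum hρ2 hρk le_rfl (by omega) le_rfl
      (by positivity) (by simp)
    have hR3bR : 2 * (k:ℝ) + 1 ≤ 5 * (ρ:ℝ) := by exact_mod_cast hR3b
    have hcube : (2 * (k:ℝ) + 1) ^ 3 ≤ (5 * (ρ:ℝ)) ^ 3 := by
      apply pow_le_pow_left₀ (by linarith) (by linarith)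
    nlinarith [hmaster, hcube, mul_nonneg (by linarith : (0:ℝ) ≤ (k:ℝ) - 100) (by positivity : (0:ℝ) ≤ (k:ℝ)),
      sq_nonneg ((k:ℝ) - (ρ:ℝ))]


end PhiUpperBoundAux

open PhiUpperBoundAux Finset in
/-- Proposition 7 of the paper, with the error term made explicit:
`φ(s₁, …, s_k) ≤ 15625 n³ / 1597536 + C n² (log n + 1)`. -/
theorem phi_upper_bound :
    ∃ C : ℝ, 0 < C ∧
      ∀ n ρ : ℕ, 0 < n → 0 < ρ → (ρ : ℝ) < (n : ℝ) / 2 →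
        ∀ s : ℕ → ℝ,
          (∀ i ∈ Finset.Icc 1 (n / 2), 0 ≤ s i) →
          (∑ i ∈ Finset.Icc 1 (n / 2), s i) ≤ (ρ : ℝ) →
          phi ρ (n / 2) s ≤
            15625 * (n : ℝ) ^ 3 / 1597536 + C * (n : ℝ) ^ 2 * (Real.log n + 1) := by
  refine ⟨30, by norm_num, ?_⟩
  intro n ρ hn hρ hρn s hs hsum
  have h2ρn : 2 * ρ < n := by
    have : 2 * (ρ:ℝ) < (n:ℝ) := by linarith
    exact_mod_cast this
  have hρk : ρ ≤ n / 2 := by omega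
  have hρ1 : 1 ≤ ρ := hρ
  have hnR : (1:ℝ) ≤ (n:ℝ) := by exact_mod_cast hn
  have hlog : 0 ≤ Real.log n := Real.log_nonneg hnR
  have hn2 : (0:ℝ) ≤ (n:ℝ) ^ 2 := by positivity
  have hred : 30 * (n:ℝ) ^ 2 ≤ 30 * (n:ℝ) ^ 2 * (Real.log n + 1) := by nlinarith
  have hkn : ((n / 2 : ℕ) : ℝ) ≤ (n : ℝ) / 2 := by
    apply Nat.cast_div_le
  rcases lt_or_ge (n / 2) 100 with hk | hk
  · -- small case
    have h := phi_le_triv ρ (n / 2) s hs hsum hρk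
    have hkn1 : (n / 2 : ℕ) + 1 ≤ n := by omega
    have hk1R : ((n / 2 : ℕ) : ℝ) + 1 ≤ (n : ℝ) := by exact_mod_cast hkn1
    have hsq : (((n / 2 : ℕ) : ℝ) + 1) ^ 2 ≤ (n : ℝ) ^ 2 := by
      apply pow_le_pow_left₀ (by positivity) hk1R
    have hρ99 : (ρ : ℝ) ≤ 99 := by exact_mod_cast (by omega : ρ ≤ 99)
    have hρ0 : (0:ℝ) ≤ (ρ : ℝ) := Nat.cast_nonneg _
    have hcube : (0:ℝ) ≤ 15625 * (n : ℝ) ^ 3 / 1597536 := by positivity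
    have hsqnn : (0:ℝ) ≤ (((n / 2 : ℕ) : ℝ) + 1) ^ 2 := by positivity
    calc phi ρ (n / 2) s ≤ (ρ : ℝ) * (((n / 2 : ℕ) : ℝ) + 1) ^ 2 / 4 := h
      _ ≤ 99 * (n : ℝ) ^ 2 / 4 := by
          apply div_le_div_of_nonneg_right ?_ (by norm_num)
          · exact mul_le_mul hρ99 hsq hsqnn (by norm_num)
      _ ≤ 15625 * (n : ℝ) ^ 3 / 1597536 + 30 * (n : ℝ) ^ 2 := by nlinarith
      _ ≤ 15625 * (n : ℝ) ^ 3 / 1597536 + 30 * (n : ℝ) ^ 2 * (Real.log n + 1) := by linarith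
  · -- main case
    have h := main_est ρ (n / 2) s hs hsum hρ1 hρk hk
    have hk0 : (0:ℝ) ≤ ((n / 2 : ℕ) : ℝ) := Nat.cast_nonneg _
    have hcube : (((n / 2 : ℕ) : ℝ)) ^ 3 ≤ ((n : ℝ) / 2) ^ 3 := by
      apply pow_le_pow_left₀ hk0 hkn
    have hsq : (((n / 2 : ℕ) : ℝ)) ^ 2 ≤ ((n : ℝ) / 2) ^ 2 := by
      apply pow_le_pow_left₀ hk0 hkn
    calc phi ρ (n / 2) s ≤ (15625 / 199692) * (((n / 2 : ℕ) : ℝ)) ^ 3 + 5 * (((n / 2 : ℕ) : ℝ)) ^ 2 := h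
      _ ≤ (15625 / 199692) * ((n : ℝ) / 2) ^ 3 + 5 * ((n : ℝ) / 2) ^ 2 := by
          have := hcube; have := hsq; nlinarith
      _ ≤ 15625 * (n : ℝ) ^ 3 / 1597536 + 30 * (n : ℝ) ^ 2 := by nlinarith
      _ ≤ 15625 * (n : ℝ) ^ 3 / 1597536 + 30 * (n : ℝ) ^ 2 * (Real.log n + 1) := by linarith
end

section
/- Let \(n\) and \(\rho<n/2\) be positive integers, \(k=\lfloor n/2\rfloor\), and let \(s_{1},\ldots,s_{k}\) be nonnegative real numbers with \(s_{1}+\cdots+s_{k}\le\rho\). Then there exist nonnegative real numbers \(s_{1}',\ldots,s_{k}'\) such that: (i) \(s_{1}'+\cdots+s_{k}'\le\rho\); (ii) \(s_{i}'=0\) for all \(i<\rho\); (iii) \(\sum_{i=1}^{\tau} i\,s_{i}'\le \tau^{2}/4\) for all \(\tau\in\{\rho,\ldots,k\}\); and (iv) \(\varphi(s_{1}',\ldots,s_{k}')\ge\varphi(s_{1},\ldots,s_{k})\). -/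
open Finset

/-- The discrete inverse of taking weighted partial sums `r ↦ ∑_{i=1}^r i * aᵢ`. -/
noncomputable def weightedDiff (f : ℕ → ℝ) (i : ℕ) : ℝ := (f i - f (i - 1)) / i

theorem sum_mul_weightedDiff (f : ℕ → ℝ) (r : ℕ) :
    ∑ i ∈ Icc 1 r, (i : ℝ) * weightedDiff f i = f r - f 0 := by
  induction r with
  | zero => simp
  | succ r ih =>
    rw [sum_Icc_succ_top (by omega), ih, weightedDiff, Nat.add_sub_cancel,
      mul_div_cancel₀ _ (by positivity)]
    ring

theorem weightedDiff_partialSum (a : ℕ → ℝ) {i : ℕ} (hi : i ≠ 0) :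
    weightedDiff (fun r ↦ ∑ j ∈ Icc 1 r, (j : ℝ) * a j) i = a i := by
  obtain ⟨i, rfl⟩ := Nat.exists_eq_succ_of_ne_zero hi
  rw [weightedDiff, sum_Icc_succ_top (by omega), Nat.succ_sub_one, add_sub_cancel_left,
    mul_div_cancel_left₀ _ (by positivity)]

theorem weightedDiff_nonneg {f : ℕ → ℝ} {i : ℕ} (hf : f (i - 1) ≤ f i) : 0 ≤ weightedDiff f i :=
  div_nonneg (sub_nonneg.2 hf) i.cast_nonneg

theorem sum_weightedDiff_add_div_le {f h : ℕ → ℝ} (h0 : f 0 = h 0) {r : ℕ}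
    (hle : ∀ i ∈ Icc 1 r, f i ≤ h i) :
    ∑ i ∈ Icc 1 r, weightedDiff f i + (h r - f r) / r ≤ ∑ i ∈ Icc 1 r, weightedDiff h i := by
  induction r with
  | zero => simp
  | succ r ih =>
    have ih := ih fun i hi ↦ hle i (Icc_subset_Icc_right r.le_succ hi)
    have hslack : (h r - f r) / (r + 1 : ℕ) ≤ (h r - f r) / r := by
      obtain rfl | hr := r.eq_zero_or_pos
      · simp [h0]
      · have := hle r (by simp; omega)
        exact div_le_div_of_nonneg_left (by linarith) (by positivity) (by simp)
    have hstep : weightedDiff f (r + 1) + (h (r + 1) - f (r + 1)) / (r + 1 : ℕ)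
        = weightedDiff h (r + 1) + (h r - f r) / (r + 1 : ℕ) := by
      simp only [weightedDiff, Nat.add_sub_cancel]; ring
    rw [sum_Icc_succ_top (by omega), sum_Icc_succ_top (by omega)]
    linarith

theorem sum_weightedDiff_mono {f h : ℕ → ℝ} (h0 : f 0 = h 0) {r : ℕ}
    (hle : ∀ i ∈ Icc 1 r, f i ≤ h i) :
    ∑ i ∈ Icc 1 r, weightedDiff f i ≤ ∑ i ∈ Icc 1 r, weightedDiff h i := by
  have hslack : 0 ≤ (h r - f r) / r := by
    obtain rfl | hr := r.eq_zero_or_pos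
    · simp
    · exact div_nonneg (sub_nonneg.2 (hle r (by simp; omega))) r.cast_nonneg
  linarith [sum_weightedDiff_add_div_le h0 hle]

theorem sum_Icc_one_eq_add_sum_Ioc (f : ℕ → ℝ) {ρ r : ℕ} (hρr : ρ ≤ r) :
    ∑ i ∈ Icc 1 r, f i = ∑ i ∈ Icc 1 ρ, f i + ∑ i ∈ Ioc ρ r, f i := by
  have hIcc (m : ℕ) : Icc 1 m = Ioc 0 m := Icc_add_one_left_eq_Ioc 0 m
  rw [hIcc, hIcc, sum_Ioc_consecutive f (Nat.zero_le ρ) hρr]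

section Concentrate

noncomputable def concentrate (ρ : ℕ) (s : ℕ → ℝ) (i : ℕ) : ℝ :=
  if i < ρ then 0 else if i = ρ then ∑ j ∈ Icc 1 ρ, s j else s i

variable {ρ : ℕ} {s : ℕ → ℝ}

theorem concentrate_of_lt {i : ℕ} (hi : i < ρ) : concentrate ρ s i = 0 := if_pos hi

theorem concentrate_nonneg {r : ℕ} (hs : ∀ i ∈ Icc 1 r, 0 ≤ s i) {i : ℕ} (hi : i ∈ Icc 1 r) :
    0 ≤ concentrate ρ s i := by
  rw [mem_Icc] at hi
  unfold concentrate
  split_ifs with hlt heq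
  · rfl
  · subst heq
    exact sum_nonneg fun j hj ↦ hs j (Icc_subset_Icc_right hi.2 hj)
  · exact hs i (mem_Icc.2 hi)

theorem sum_mul_concentrate (hρ : 0 < ρ) (w : ℕ → ℝ) {r : ℕ} (hρr : ρ ≤ r) :
    ∑ i ∈ Icc 1 r, w i * concentrate ρ s i
      = w ρ * ∑ i ∈ Icc 1 ρ, s i + ∑ i ∈ Ioc ρ r, w i * s i := by
  rw [sum_Icc_one_eq_add_sum_Ioc _ hρr]
  congr 1
  · rw [sum_eq_single_of_mem ρ (by simp; omega) fun i hi hne ↦ ?_]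
    · simp [concentrate]
    · rw [concentrate_of_lt (by simp at hi; omega), mul_zero]
  · refine sum_congr rfl fun i hi ↦ ?_
    rw [mem_Ioc] at hi
    simp [concentrate, hi.1.not_gt, hi.1.ne']

theorem sum_concentrate (hρ : 0 < ρ) {r : ℕ} (hρr : ρ ≤ r) :
    ∑ i ∈ Icc 1 r, concentrate ρ s i = ∑ i ∈ Icc 1 r, s i := by
  simpa [sum_Icc_one_eq_add_sum_Ioc s hρr] using sum_mul_concentrate (s := s) hρ 1 hρr

theorem sum_mul_le_sum_mul_concentrate (hρ : 0 < ρ) {r : ℕ} (hρr : ρ ≤ r)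
    (hs : ∀ i ∈ Icc 1 ρ, 0 ≤ s i) :
    ∑ i ∈ Icc 1 r, (i : ℝ) * s i ≤ ∑ i ∈ Icc 1 r, (i : ℝ) * concentrate ρ s i := by
  rw [sum_mul_concentrate hρ _ hρr, sum_Icc_one_eq_add_sum_Ioc _ hρr, mul_sum]
  gcongr with i hi
  · exact hs i hi
  · exact (mem_Icc.1 hi).2

end Concentrate

noncomputable def cappedMass (ρ : ℕ) (s : ℕ → ℝ) (r : ℕ) : ℝ :=
  min ((r : ℝ) ^ 2 / 4) (∑ i ∈ Icc 1 r, (i : ℝ) * concentrate ρ s i)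

section CappedMass

variable {ρ : ℕ} {s : ℕ → ℝ}

theorem cappedMass_of_lt {r : ℕ} (hr : r < ρ) : cappedMass ρ s r = 0 := by
  have hzero : ∑ i ∈ Icc 1 r, (i : ℝ) * concentrate ρ s i = 0 :=
    sum_eq_zero fun i hi ↦ by rw [concentrate_of_lt ((mem_Icc.1 hi).2.trans_lt hr), mul_zero]
  rw [cappedMass, hzero, min_eq_right (by positivity)]

theorem cappedMass_sub_one_le {k : ℕ} (hs : ∀ i ∈ Icc 1 k, 0 ≤ s i) {i : ℕ} (hi : i ∈ Icc 1 k) :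
    cappedMass ρ s (i - 1) ≤ cappedMass ρ s i := by
  obtain ⟨j, rfl⟩ := Nat.exists_eq_add_of_le' (mem_Icc.1 hi).1
  have hterm : 0 ≤ ((j + 1 : ℕ) : ℝ) * concentrate ρ s (j + 1) :=
    mul_nonneg (Nat.cast_nonneg _) (concentrate_nonneg hs hi)
  rw [Nat.add_sub_cancel, cappedMass, cappedMass, sum_Icc_succ_top (by omega)]
  gcongr
  · linarith
  · exact le_add_of_nonneg_right hterm

end CappedMass

theorem reduce_to_feasible_general (n ρ : ℕ) (hρ : 0 < ρ)
    (hρn : (ρ : ℝ) < (n : ℝ) / 2) (s : ℕ → ℝ)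
    (hnonneg : ∀ i ∈ Finset.Icc 1 (n / 2), 0 ≤ s i)
    (hsum : (∑ i ∈ Finset.Icc 1 (n / 2), s i) ≤ (ρ : ℝ)) :
    ∃ s' : ℕ → ℝ,
      (∀ i ∈ Finset.Icc 1 (n / 2), 0 ≤ s' i) ∧
      (∑ i ∈ Finset.Icc 1 (n / 2), s' i) ≤ (ρ : ℝ) ∧
      (∀ i ∈ Finset.Icc 1 (n / 2), i < ρ → s' i = 0) ∧
      (∀ τ ∈ Finset.Icc ρ (n / 2),
        ∑ i ∈ Finset.Icc 1 τ, (i : ℝ) * s' i ≤ (τ : ℝ) ^ 2 / 4) ∧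
      phi ρ (n / 2) s ≤ phi ρ (n / 2) s' := by
  have hρk : ρ ≤ n / 2 := by
    have : 2 * ρ < n := by exact_mod_cast (by linarith : (2 * ρ : ℝ) < n)
    omega
  have ht0 : cappedMass ρ s 0 = 0 := cappedMass_of_lt hρ
  have hpartial (r : ℕ) : ∑ i ∈ Icc 1 r, (i : ℝ) * weightedDiff (cappedMass ρ s) i
      = cappedMass ρ s r := by
    rw [sum_mul_weightedDiff, ht0, sub_zero]
  refine ⟨weightedDiff (cappedMass ρ s),
    fun i hi ↦ weightedDiff_nonneg (cappedMass_sub_one_le hnonneg hi), ?_,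
    fun i _ hi ↦ by
      rw [weightedDiff, cappedMass_of_lt hi, cappedMass_of_lt ((i.sub_le 1).trans_lt hi),
        sub_zero, zero_div],
    fun τ _ ↦ (hpartial τ).trans_le (min_le_left _ _), ?_⟩
  · calc ∑ i ∈ Icc 1 (n / 2), weightedDiff (cappedMass ρ s) i
        ≤ ∑ i ∈ Icc 1 (n / 2),
            weightedDiff (fun r ↦ ∑ j ∈ Icc 1 r, (j : ℝ) * concentrate ρ s j) i :=
          sum_weightedDiff_mono (by simp [ht0]) fun i _ ↦ min_le_right _ _
      _ = ∑ i ∈ Icc 1 (n / 2), concentrate ρ s i :=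
          sum_congr rfl fun i hi ↦ weightedDiff_partialSum _ (by simp at hi; omega)
      _ = ∑ i ∈ Icc 1 (n / 2), s i := sum_concentrate hρ hρk
      _ ≤ ρ := hsum
  · refine sum_le_sum fun r hr ↦ ?_
    rw [hpartial, cappedMass, min_eq_right (min_le_left _ _)]
    exact min_le_min_left _ (sum_mul_le_sum_mul_concentrate hρ (mem_Icc.1 hr).1
      fun i hi ↦ hnonneg i (Icc_subset_Icc_right hρk hi))

/-- Claim 1 of the paper: any admissible tuple can be replaced by one in the feasible set
without decreasing `φ`. -/
theorem reduce_to_feasible (n ρ : ℕ) (hn : 0 < n) (hρ : 0 < ρ)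
    (hρn : (ρ : ℝ) < (n : ℝ) / 2) (s : ℕ → ℝ)
    (hnonneg : ∀ i ∈ Finset.Icc 1 (n / 2), 0 ≤ s i)
    (hsum : (∑ i ∈ Finset.Icc 1 (n / 2), s i) ≤ (ρ : ℝ)) :
    ∃ s' : ℕ → ℝ,
      (∀ i ∈ Finset.Icc 1 (n / 2), 0 ≤ s' i) ∧
      (∑ i ∈ Finset.Icc 1 (n / 2), s' i) ≤ (ρ : ℝ) ∧
      (∀ i ∈ Finset.Icc 1 (n / 2), i < ρ → s' i = 0) ∧
      (∀ τ ∈ Finset.Icc ρ (n / 2),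
        ∑ i ∈ Finset.Icc 1 τ, (i : ℝ) * s' i ≤ (τ : ℝ) ^ 2 / 4) ∧
      phi ρ (n / 2) s ≤ phi ρ (n / 2) s' :=
  reduce_to_feasible_general n ρ hρ hρn s hnonneg hsum
end

section
/- Let \(n\) and \(\rho<n/2\) be positive integers and \(k=\lfloor n/2\rfloor\). Let \(\sigma=(\sigma_{1},\ldots,\sigma_{k})\) be a point of the feasible set at which \(\varphi\) attains its maximum over the feasible set, and suppose \(\sigma\ne 0\). Let \(\beta\) and \(\gamma\) be, respectively, the minimal and maximal indices \(i\) with \(\sigma_{i}\ne 0\). Then \(\sum_{i=1}^{r} i\,\sigma_{i} = r^{2}/4\) for every \(r\in\{\beta+1,\ldots,\gamma-1\}\). -/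
/-- The feasible set: nonnegative tuples summing to at most `ρ`, vanishing below `ρ`, and
satisfying `∑_{i=1}^{τ} i·sᵢ ≤ τ²/4` for all `τ ∈ {ρ, …, k}`. -/
def Feasible (ρ k : ℕ) (s : ℕ → ℝ) : Prop :=
  (∀ i ∈ Finset.Icc 1 k, 0 ≤ s i) ∧
  (∑ i ∈ Finset.Icc 1 k, s i) ≤ (ρ : ℝ) ∧
  (∀ i ∈ Finset.Icc 1 k, i < ρ → s i = 0) ∧
  (∀ τ ∈ Finset.Icc ρ k, ∑ i ∈ Finset.Icc 1 τ, (i : ℝ) * s i ≤ (τ : ℝ) ^ 2 / 4)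

set_option maxHeartbeats 1000000 in
lemma core_tight (ρ k : ℕ) (σ : ℕ → ℝ) (hσ : Feasible ρ k σ)
    (hmax : ∀ τ : ℕ → ℝ, Feasible ρ k τ → phi ρ k τ ≤ phi ρ k σ)
    (β r : ℕ) (hρβ : ρ ≤ β) (h1β : 1 ≤ β) (hβr : β + 1 ≤ r) (hrk : r + 1 ≤ k)
    (hσβ : 0 < σ β) (hσr1 : 0 < σ (r + 1)) :
    ∑ i ∈ Finset.Icc 1 r, (i : ℝ) * σ i = (r : ℝ) ^ 2 / 4 := by
  obtain ⟨hpos, hsum, hvan, hcon⟩ := hσ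
  have hrmem : r ∈ Finset.Icc ρ k := by rw [Finset.mem_Icc]; omega
  have hSr_le : ∑ i ∈ Finset.Icc 1 r, (i : ℝ) * σ i ≤ (r : ℝ) ^ 2 / 4 := hcon r hrmem
  rcases eq_or_lt_of_le hSr_le with heq | hlt
  · exact heq
  exfalso
  have hβrR : (β : ℝ) + 1 ≤ (r : ℝ) := by exact_mod_cast hβr
  have hApos : (0 : ℝ) < (r : ℝ) - (β : ℝ) := by linarith
  have hr1pos : (0 : ℝ) < 1 + (r : ℝ) := by positivity
  -- choose δ
  obtain ⟨δ, hδpos, hδ1, hδ2, hδ3⟩ : ∃ δ : ℝ, 0 < δ ∧ δ ≤ σ β ∧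
      ((r : ℝ) - (β : ℝ)) * δ ≤ σ (r + 1) ∧
      ((r : ℝ) - (β : ℝ)) * (1 + (r : ℝ)) * δ ≤
        (r : ℝ) ^ 2 / 4 - ∑ i ∈ Finset.Icc 1 r, (i : ℝ) * σ i := by
    refine ⟨min (σ β) (min (σ (r + 1) / ((r : ℝ) - (β : ℝ)))
      (((r : ℝ) ^ 2 / 4 - ∑ i ∈ Finset.Icc 1 r, (i : ℝ) * σ i) /
        (((r : ℝ) - (β : ℝ)) * (1 + (r : ℝ))))), ?_, min_le_left _ _, ?_, ?_⟩
    · exact lt_min hσβ (lt_min (div_pos hσr1 hApos)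
        (div_pos (by linarith) (by positivity)))
    · have h : min (σ β) (min (σ (r + 1) / ((r : ℝ) - (β : ℝ)))
          (((r : ℝ) ^ 2 / 4 - ∑ i ∈ Finset.Icc 1 r, (i : ℝ) * σ i) /
            (((r : ℝ) - (β : ℝ)) * (1 + (r : ℝ))))) ≤ σ (r + 1) / ((r : ℝ) - (β : ℝ)) :=
        (min_le_right _ _).trans (min_le_left _ _)
      rw [le_div_iff₀ hApos] at h
      linarith
    · have h : min (σ β) (min (σ (r + 1) / ((r : ℝ) - (β : ℝ)))
          (((r : ℝ) ^ 2 / 4 - ∑ i ∈ Finset.Icc 1 r, (i : ℝ) * σ i) /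
            (((r : ℝ) - (β : ℝ)) * (1 + (r : ℝ))))) ≤
          ((r : ℝ) ^ 2 / 4 - ∑ i ∈ Finset.Icc 1 r, (i : ℝ) * σ i) /
            (((r : ℝ) - (β : ℝ)) * (1 + (r : ℝ))) :=
        (min_le_right _ _).trans (min_le_right _ _)
      rw [le_div_iff₀ (by positivity : (0:ℝ) < ((r : ℝ) - (β : ℝ)) * (1 + (r : ℝ)))] at h
      linarith
  -- the perturbed tuple
  set τ : ℕ → ℝ := fun i => σ i + δ * ((if i = β then (-1 : ℝ) else 0)
      + (if i = r then 1 + ((r : ℝ) - (β : ℝ)) else 0)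
      + (if i = r + 1 then -((r : ℝ) - (β : ℝ)) else 0)) with hτdef
  have hτi : ∀ i : ℕ, τ i = σ i + δ * ((if i = β then (-1 : ℝ) else 0)
      + (if i = r then 1 + ((r : ℝ) - (β : ℝ)) else 0)
      + (if i = r + 1 then -((r : ℝ) - (β : ℝ)) else 0)) := fun i => rfl
  -- weighted partial sums of τ
  have hw : ∀ t : ℕ, ∑ i ∈ Finset.Icc 1 t, (i : ℝ) * τ i =
      (∑ i ∈ Finset.Icc 1 t, (i : ℝ) * σ i)
      + δ * ((if β ∈ Finset.Icc 1 t then (β : ℝ) * (-1) else 0)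
        + (if r ∈ Finset.Icc 1 t then (r : ℝ) * (1 + ((r : ℝ) - (β : ℝ))) else 0)
        + (if r + 1 ∈ Finset.Icc 1 t then ((r : ℝ) + 1) * (-((r : ℝ) - (β : ℝ))) else 0)) := by
    intro t
    have hterm : ∀ i : ℕ, (i : ℝ) * τ i = (i : ℝ) * σ i +
        δ * ((if i = β then (i : ℝ) * (-1) else 0)
          + (if i = r then (i : ℝ) * (1 + ((r : ℝ) - (β : ℝ))) else 0)
          + (if i = r + 1 then (i : ℝ) * (-((r : ℝ) - (β : ℝ))) else 0)) := by
      intro i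
      rw [hτi i]
      split_ifs <;> push_cast <;> ring
    rw [Finset.sum_congr rfl fun i _ => hterm i, Finset.sum_add_distrib, ← Finset.mul_sum,
      Finset.sum_add_distrib, Finset.sum_add_distrib,
      Finset.sum_ite_eq' _ β (fun i => (i : ℝ) * (-1)),
      Finset.sum_ite_eq' _ r (fun i => (i : ℝ) * (1 + ((r : ℝ) - (β : ℝ)))),
      Finset.sum_ite_eq' _ (r + 1) (fun i => (i : ℝ) * (-((r : ℝ) - (β : ℝ))))]
    push_cast
    ring_nf
  -- plain sum of τ
  have hsumτ : ∑ i ∈ Finset.Icc 1 k, τ i = ∑ i ∈ Finset.Icc 1 k, σ i := by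
    have hterm : ∀ i : ℕ, τ i = σ i +
        ((if i = β then δ * (-1) else 0) + (if i = r then δ * (1 + ((r : ℝ) - (β : ℝ))) else 0)
          + (if i = r + 1 then δ * (-((r : ℝ) - (β : ℝ))) else 0)) := by
      intro i; rw [hτi i]; split_ifs <;> ring
    rw [Finset.sum_congr rfl fun i _ => hterm i, Finset.sum_add_distrib,
      Finset.sum_add_distrib, Finset.sum_add_distrib,
      Finset.sum_ite_eq' _ β (fun _ => δ * (-1)),
      Finset.sum_ite_eq' _ r (fun _ => δ * (1 + ((r : ℝ) - (β : ℝ)))),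
      Finset.sum_ite_eq' _ (r + 1) (fun _ => δ * (-((r : ℝ) - (β : ℝ))))]
    rw [if_pos (by rw [Finset.mem_Icc]; omega : β ∈ Finset.Icc 1 k),
      if_pos (by rw [Finset.mem_Icc]; omega : r ∈ Finset.Icc 1 k),
      if_pos (by rw [Finset.mem_Icc]; omega : r + 1 ∈ Finset.Icc 1 k)]
    ring
  -- feasibility of τ
  have hfeas : Feasible ρ k τ := by
    refine ⟨?_, ?_, ?_, ?_⟩
    · intro i hi
      rw [hτi i]
      by_cases h1 : i = β
      · rw [if_pos h1, if_neg (by omega), if_neg (by omega)]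
        rw [h1]; linarith
      by_cases h2 : i = r
      · rw [if_neg h1, if_pos h2, if_neg (by omega)]
        have := hpos i hi
        nlinarith
      by_cases h3 : i = r + 1
      · rw [if_neg h1, if_neg h2, if_pos h3]
        rw [h3]
        nlinarith
      · rw [if_neg h1, if_neg h2, if_neg h3]
        have := hpos i hi
        linarith
    · rw [hsumτ]; exact hsum
    · intro i hi hiρ
      rw [hτi i, if_neg (by omega), if_neg (by omega), if_neg (by omega)]
      rw [hvan i hi hiρ]; ring
    · intro t ht
      rw [hw t]
      rw [Finset.mem_Icc] at ht
      by_cases h1 : t < β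
      · rw [if_neg (by rw [Finset.mem_Icc]; omega), if_neg (by rw [Finset.mem_Icc]; omega),
          if_neg (by rw [Finset.mem_Icc]; omega)]
        have := hcon t (by rw [Finset.mem_Icc]; omega)
        linarith
      push_neg at h1
      by_cases h2 : t < r
      · rw [if_pos (by rw [Finset.mem_Icc]; omega), if_neg (by rw [Finset.mem_Icc]; omega),
          if_neg (by rw [Finset.mem_Icc]; omega)]
        have := hcon t (by rw [Finset.mem_Icc]; omega)
        have hβ0 : (0 : ℝ) ≤ (β : ℝ) := by positivity
        nlinarith
      push_neg at h2
      by_cases h3 : t < r + 1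
      · have htr : t = r := by omega
        rw [htr]
        rw [if_pos (by rw [Finset.mem_Icc]; omega), if_pos (by rw [Finset.mem_Icc]; omega),
          if_neg (by rw [Finset.mem_Icc]; omega)]
        have hco : (β : ℝ) * (-1) + (r : ℝ) * (1 + ((r : ℝ) - (β : ℝ))) + 0
            = ((r : ℝ) - (β : ℝ)) * (1 + (r : ℝ)) := by ring
        rw [hco]
        nlinarith
      push_neg at h3
      · rw [if_pos (by rw [Finset.mem_Icc]; omega), if_pos (by rw [Finset.mem_Icc]; omega),
          if_pos (by rw [Finset.mem_Icc]; omega)]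
        have hco : (β : ℝ) * (-1) + (r : ℝ) * (1 + ((r : ℝ) - (β : ℝ)))
            + ((r : ℝ) + 1) * (-((r : ℝ) - (β : ℝ))) = 0 := by ring
        rw [hco, mul_zero, add_zero]
        exact hcon t (by rw [Finset.mem_Icc]; omega)
  -- phi values
  have hphiσ : phi ρ k σ = ∑ t ∈ Finset.Icc ρ k, ∑ i ∈ Finset.Icc 1 t, (i : ℝ) * σ i :=
    Finset.sum_congr rfl fun t ht => min_eq_right (hcon t ht)
  have hphiτ : phi ρ k τ = ∑ t ∈ Finset.Icc ρ k, ((∑ i ∈ Finset.Icc 1 t, (i : ℝ) * σ i)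
      + δ * ((if β ∈ Finset.Icc 1 t then (β : ℝ) * (-1) else 0)
        + (if r ∈ Finset.Icc 1 t then (r : ℝ) * (1 + ((r : ℝ) - (β : ℝ))) else 0)
        + (if r + 1 ∈ Finset.Icc 1 t then ((r : ℝ) + 1) * (-((r : ℝ) - (β : ℝ))) else 0))) := by
    refine Finset.sum_congr rfl fun t ht => ?_
    rw [← hw t]
    exact min_eq_right (hfeas.2.2.2 t ht)
  -- counting
  have hcount : ∀ (x : ℕ) (cx : ℝ), ρ ≤ x → x ≤ k → 1 ≤ x →
      ∑ t ∈ Finset.Icc ρ k, (if x ∈ Finset.Icc 1 t then cx else 0)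
        = ((k + 1 - x : ℕ) : ℝ) * cx := by
    intro x cx hx1 hx2 hx3
    have hterm : ∀ t : ℕ, (if x ∈ Finset.Icc 1 t then cx else 0)
        = if x ≤ t then cx else 0 := by
      intro t
      by_cases h : x ≤ t
      · rw [if_pos (Finset.mem_Icc.mpr ⟨hx3, h⟩), if_pos h]
      · rw [if_neg (fun hm => h (Finset.mem_Icc.mp hm).2), if_neg h]
    rw [Finset.sum_congr rfl fun t _ => hterm t, ← Finset.sum_filter]
    have hfil : (Finset.Icc ρ k).filter (fun t => x ≤ t) = Finset.Icc x k := by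
      ext t; simp only [Finset.mem_filter, Finset.mem_Icc]; omega
    rw [hfil, Finset.sum_const, Nat.card_Icc, nsmul_eq_mul]
  have hsplit : phi ρ k τ = phi ρ k σ
      + δ * (((k + 1 - β : ℕ) : ℝ) * ((β : ℝ) * (-1))
      + ((k + 1 - r : ℕ) : ℝ) * ((r : ℝ) * (1 + ((r : ℝ) - (β : ℝ))))
      + ((k + 1 - (r + 1) : ℕ) : ℝ) * (((r : ℝ) + 1) * (-((r : ℝ) - (β : ℝ))))) := by
    rw [hphiτ, hphiσ, Finset.sum_add_distrib, ← Finset.mul_sum,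
      Finset.sum_add_distrib, Finset.sum_add_distrib,
      hcount β _ hρβ (by omega) h1β,
      hcount r _ (by omega) (by omega) (by omega),
      hcount (r + 1) _ (by omega) (by omega) (by omega)]
  have hgain : ((k + 1 - β : ℕ) : ℝ) * ((β : ℝ) * (-1))
      + ((k + 1 - r : ℕ) : ℝ) * ((r : ℝ) * (1 + ((r : ℝ) - (β : ℝ))))
      + ((k + 1 - (r + 1) : ℕ) : ℝ) * (((r : ℝ) + 1) * (-((r : ℝ) - (β : ℝ))))
      = ((r : ℝ) - (β : ℝ)) * (((r : ℝ) - (β : ℝ)) + 1) := by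
    rw [Nat.cast_sub (by omega), Nat.cast_sub (by omega), Nat.cast_sub (by omega)]
    push_cast
    ring
  rw [hgain] at hsplit
  have hgt : 0 < δ * (((r : ℝ) - (β : ℝ)) * (((r : ℝ) - (β : ℝ)) + 1)) :=
    mul_pos hδpos (mul_pos hApos (by linarith))
  have := hmax τ hfeas
  linarith

/-- Claim 2 of the paper: at a nonzero maximizer `σ` of `φ` over the feasible set, with minimal
and maximal nonzero indices `β` and `γ`, the partial-sum constraints are tight for
`r ∈ {β + 1, …, γ - 1}`. -/
theorem maximizer_partial_sums_tight (n ρ : ℕ) (hn : 0 < n) (hρ : 0 < ρ)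
    (hρn : (ρ : ℝ) < (n : ℝ) / 2) (σ : ℕ → ℝ)
    (hσ : Feasible ρ (n / 2) σ)
    (hmax : ∀ τ : ℕ → ℝ, Feasible ρ (n / 2) τ → phi ρ (n / 2) τ ≤ phi ρ (n / 2) σ)
    (β γ : ℕ) (hβmem : β ∈ Finset.Icc 1 (n / 2)) (hγmem : γ ∈ Finset.Icc 1 (n / 2))
    (hβ : σ β ≠ 0) (hγ : σ γ ≠ 0)
    (hminmax : ∀ i ∈ Finset.Icc 1 (n / 2), σ i ≠ 0 → β ≤ i ∧ i ≤ γ) :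
    ∀ r ∈ Finset.Icc (β + 1) (γ - 1),
      ∑ i ∈ Finset.Icc 1 r, (i : ℝ) * σ i = (r : ℝ) ^ 2 / 4 := by
  set k := n / 2 with hkdef
  rw [Finset.mem_Icc] at hβmem hγmem
  have hρβ : ρ ≤ β := by
    by_contra h
    exact hβ (hσ.2.2.1 β (Finset.mem_Icc.mpr hβmem) (by omega))
  have hσβpos : 0 < σ β := lt_of_le_of_ne (hσ.1 β (Finset.mem_Icc.mpr hβmem)) (Ne.symm hβ)
  have hσγpos : 0 < σ γ := lt_of_le_of_ne (hσ.1 γ (Finset.mem_Icc.mpr hγmem)) (Ne.symm hγ)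
  have key : ∀ m : ℕ, ∀ r : ℕ, β + 1 ≤ r → r + 1 + m = γ →
      ∑ i ∈ Finset.Icc 1 r, (i : ℝ) * σ i = (r : ℝ) ^ 2 / 4 := by
    intro m
    induction m with
    | zero =>
      intro r h1 h2
      have hr1γ : r + 1 = γ := by omega
      exact core_tight ρ k σ hσ hmax β r hρβ hβmem.1 h1 (by omega)
        hσβpos (by rw [hr1γ]; exact hσγpos)
    | succ m ih =>
      intro r h1 h2
      have hS1 : ∑ i ∈ Finset.Icc 1 (r + 1), (i : ℝ) * σ i = ((r + 1 : ℕ) : ℝ) ^ 2 / 4 :=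
        ih (r + 1) (by omega) (by omega)
      have hrk : r + 1 ≤ k := by omega
      have hSle : ∑ i ∈ Finset.Icc 1 r, (i : ℝ) * σ i ≤ (r : ℝ) ^ 2 / 4 :=
        hσ.2.2.2 r (Finset.mem_Icc.mpr ⟨by omega, by omega⟩)
      have hsplit : ∑ i ∈ Finset.Icc 1 (r + 1), (i : ℝ) * σ i =
          (∑ i ∈ Finset.Icc 1 r, (i : ℝ) * σ i) + ((r + 1 : ℕ) : ℝ) * σ (r + 1) :=
        Finset.sum_Icc_succ_top (by omega) _
      have hσr1pos : 0 < σ (r + 1) := by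
        have hcast : ((r + 1 : ℕ) : ℝ) = (r : ℝ) + 1 := by push_cast; ring
        rw [hcast] at hS1 hsplit
        nlinarith [hS1, hsplit, hSle]
      exact core_tight ρ k σ hσ hmax β r hρβ hβmem.1 h1 hrk hσβpos hσr1pos
  intro r hr
  rw [Finset.mem_Icc] at hr
  exact key (γ - (r + 1)) r hr.1 (by omega)
end

section
/- Let \(\sigma_{1},\ldots,\sigma_{k}\) be real numbers and let \(\beta<\gamma\) be indices such that \(\sum_{i=1}^{r} i\,\sigma_{i} = r^{2}/4\) for every \(r\in\{\beta+1,\ldots,\gamma-1\}\). Then \(\sigma_{r} = 1/2 - 1/(4r)\) for every \(r\in\{\beta+2,\ldots,\gamma-1\}\), and, provided \(\gamma\ge\beta+2\) and \(\sigma_{\beta}\ge 0\) is the only possibly nonzero coordinate among \(\sigma_{1},\ldots,\sigma_{\beta}\), also \(\sigma_{\beta}+\sigma_{\beta+1}\ge (\beta+1)/4\). -/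
/-- Equations (3) and (4) of the paper: if `∑_{i=1}^{r} i·σᵢ = r²/4` for all
`r ∈ {β+1, …, γ-1}`, then `σ_r = 1/2 - 1/(4r)` for `r ∈ {β+2, …, γ-1}`, and (when `γ ≥ β + 2`
and `σ_β ≥ 0` is the only possibly nonzero coordinate among `σ₁, …, σ_β`)
also `σ_β + σ_{β+1} ≥ (β+1)/4`. -/
theorem tight_partial_sums_consequences (k : ℕ) (σ : ℕ → ℝ) (β γ : ℕ)
    (hβ1 : 1 ≤ β) (hγk : γ ≤ k) (hβγ : β < γ)
    (htight : ∀ r ∈ Finset.Icc (β + 1) (γ - 1),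
      ∑ i ∈ Finset.Icc 1 r, (i : ℝ) * σ i = (r : ℝ) ^ 2 / 4) :
    (∀ r ∈ Finset.Icc (β + 2) (γ - 1), σ r = 1 / 2 - 1 / (4 * (r : ℝ))) ∧
    (β + 2 ≤ γ → 0 ≤ σ β → (∀ i ∈ Finset.Icc 1 (β - 1), σ i = 0) →
      σ β + σ (β + 1) ≥ ((β : ℝ) + 1) / 4) := by
  constructor
  · intro r hr
    simp only [Finset.mem_Icc] at hr
    obtain ⟨hr1, hr2⟩ := hr
    have h1 := htight r (Finset.mem_Icc.mpr ⟨by omega, hr2⟩)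
    have h2 := htight (r - 1) (Finset.mem_Icc.mpr ⟨by omega, by omega⟩)
    have hr' : r - 1 + 1 = r := by omega
    have hsum : ∑ i ∈ Finset.Icc 1 r, (i : ℝ) * σ i
        = (∑ i ∈ Finset.Icc 1 (r - 1), (i : ℝ) * σ i) + r * σ r := by
      rw [← hr', Finset.sum_Icc_succ_top (by omega)]
      simp [hr']
    rw [hsum, h2] at h1
    have hcast : ((r - 1 : ℕ) : ℝ) = (r : ℝ) - 1 := by
      have h : 1 ≤ r := by omega
      push_cast [h]
      ring
    rw [hcast] at h1
    have hrpos : (0 : ℝ) < r := by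
      exact_mod_cast (by omega : 0 < r)
    have key : (r : ℝ) * σ r = (2 * r - 1) / 4 := by nlinarith [h1]
    field_simp
    nlinarith [key]
  · intro hγ hσβ hzero
    have h := htight (β + 1) (Finset.mem_Icc.mpr ⟨le_refl _, by omega⟩)
    have e1 : ∑ i ∈ Finset.Icc 1 (β + 1), (i : ℝ) * σ i
        = (∑ i ∈ Finset.Icc 1 β, (i : ℝ) * σ i) + (β + 1) * σ (β + 1) := by
      rw [Finset.sum_Icc_succ_top (by omega)]
      push_cast
      ring
    have hβ' : β - 1 + 1 = β := by omega
    have e2 : ∑ i ∈ Finset.Icc 1 β, (i : ℝ) * σ i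
        = (∑ i ∈ Finset.Icc 1 (β - 1), (i : ℝ) * σ i) + β * σ β := by
      rw [← hβ', Finset.sum_Icc_succ_top (by omega)]
      simp [hβ']
    have e3 : ∑ i ∈ Finset.Icc 1 (β - 1), (i : ℝ) * σ i = 0 :=
      Finset.sum_eq_zero (fun i hi => by rw [hzero i hi]; ring)
    rw [e1, e2, e3] at h
    push_cast at h
    have hβR : (1 : ℝ) ≤ β := by exact_mod_cast hβ1
    nlinarith [h, hσβ, hβR]
end

section
/- Let \(n\) and \(\rho<n/2\) be positive integers, \(k=\lfloor n/2\rfloor\), and let \(\sigma=(\sigma_{1},\ldots,\sigma_{k})\) be a nonzero maximizer of \(\varphi\) over the feasible set, with \(\beta\) and \(\gamma\) the minimal and maximal indices \(i\) with \(\sigma_{i}\ne0\). Then \(\beta \ge \frac{\beta+1}{4} + \frac{\gamma-\beta-2}{2} - \frac{\ln n}{4}\). -/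
open Finset

noncomputable def partialMoment (s : ℕ → ℝ) (r : ℕ) : ℝ := ∑ i ∈ Icc 1 r, (i : ℝ) * s i

lemma phi_eq_sum_min (ρ k : ℕ) (s : ℕ → ℝ) :
    phi ρ k s = ∑ r ∈ Icc ρ k, min ((r : ℝ) ^ 2 / 4) (partialMoment s r) := rfl

lemma partialMoment_succ (s : ℕ → ℝ) (r : ℕ) :
    partialMoment s (r + 1) = partialMoment s r + ((r : ℝ) + 1) * s (r + 1) := by
  rw [partialMoment, sum_Icc_succ_top (by omega), Nat.cast_succ]
  rfl

lemma partialMoment_le_mul_sum {s : ℕ → ℝ} {r : ℕ} (hs : ∀ i ∈ Icc 1 r, 0 ≤ s i) :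
    partialMoment s r ≤ r * ∑ i ∈ Icc 1 r, s i := by
  rw [partialMoment, mul_sum]
  refine sum_le_sum fun i hi => mul_le_mul_of_nonneg_right ?_ (hs i hi)
  exact_mod_cast (mem_Icc.1 hi).2

lemma pos_of_partialMoment_lt_succ {s : ℕ → ℝ} {r : ℕ}
    (h : partialMoment s r < partialMoment s (r + 1)) : 0 < s (r + 1) := by
  rw [partialMoment_succ] at h
  exact pos_of_mul_pos_right (by linarith : 0 < ((r : ℝ) + 1) * s (r + 1)) (by positivity)

lemma apply_succ_eq_of_partialMoment_eq {s : ℕ → ℝ} {j : ℕ}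
    (h₀ : partialMoment s j = (j : ℝ) ^ 2 / 4)
    (h₁ : partialMoment s (j + 1) = ((j + 1 : ℕ) : ℝ) ^ 2 / 4) :
    s (j + 1) = 1 / 2 - 1 / 4 * ((j + 1 : ℕ) : ℝ)⁻¹ := by
  rw [partialMoment_succ, h₀] at h₁
  push_cast at h₁ ⊢
  field_simp
  linarith

noncomputable def dipole (b : ℕ) : ℕ → ℝ := Pi.single b ((b : ℝ) + 1) - Pi.single (b + 1) (b : ℝ)

lemma partialMoment_dipole {b : ℕ} (hb : 1 ≤ b) (r : ℕ) :
    partialMoment (dipole b) r = if r = b then (b : ℝ) * (b + 1) else 0 := by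
  simp only [partialMoment, dipole, Pi.sub_apply, Pi.single_apply, mul_sub, mul_ite, mul_zero,
    sum_sub_distrib, sum_ite_eq', mem_Icc]
  split_ifs <;> first | omega | (push_cast; ring)

lemma sum_dipole {b k : ℕ} (hb : 1 ≤ b) (hbk : b + 1 ≤ k) : ∑ i ∈ Icc 1 k, dipole b i = 1 := by
  simp only [dipole, Pi.sub_apply, Pi.single_apply, sum_sub_distrib, sum_ite_eq', mem_Icc]
  rw [if_pos ⟨hb, by omega⟩, if_pos ⟨by omega, hbk⟩]
  ring

noncomputable def transfer (s : ℕ → ℝ) (δ : ℝ) (b t : ℕ) : ℕ → ℝ := s + δ • (dipole t - dipole b)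

lemma partialMoment_transfer (s : ℕ → ℝ) (δ : ℝ) {b t : ℕ} (hb : 1 ≤ b) (ht : 1 ≤ t) (r : ℕ) :
    partialMoment (transfer s δ b t) r = partialMoment s r
      + δ * ((if r = t then (t : ℝ) * (t + 1) else 0)
        - if r = b then (b : ℝ) * (b + 1) else 0) := by
  rw [← partialMoment_dipole hb, ← partialMoment_dipole ht]
  simp only [partialMoment, transfer, Pi.add_apply, Pi.smul_apply, Pi.sub_apply, smul_eq_mul,
    mul_sum, ← sum_sub_distrib, ← sum_add_distrib]
  exact sum_congr rfl fun i _ => by ring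

lemma sum_transfer (s : ℕ → ℝ) (δ : ℝ) {b t k : ℕ} (hb : 1 ≤ b) (hbk : b + 1 ≤ k) (ht : 1 ≤ t)
    (htk : t + 1 ≤ k) : ∑ i ∈ Icc 1 k, transfer s δ b t i = ∑ i ∈ Icc 1 k, s i := by
  simp only [transfer, Pi.add_apply, Pi.smul_apply, Pi.sub_apply, smul_eq_mul, sum_add_distrib,
    ← mul_sum, sum_sub_distrib, sum_dipole hb hbk, sum_dipole ht htk]
  ring

lemma transfer_apply (s : ℕ → ℝ) (δ : ℝ) (b t i : ℕ) :
    transfer s δ b t i = s i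
      + δ * ((if i = t then (t : ℝ) + 1 else 0) - (if i = t + 1 then (t : ℝ) else 0)
      - ((if i = b then (b : ℝ) + 1 else 0) - if i = b + 1 then (b : ℝ) else 0)) := by
  simp [transfer, dipole, Pi.single_apply]

lemma Feasible.transfer {ρ k b t : ℕ} {s : ℕ → ℝ} {δ : ℝ} (hs : Feasible ρ k s) (hb : 1 ≤ b)
    (hρb : ρ ≤ b) (hbt : b < t) (htk : t + 1 ≤ k) (hδ : 0 ≤ δ) (hsb : ((b : ℝ) + 1) * δ ≤ s b)
    (hst : (t : ℝ) * δ ≤ s (t + 1))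
    (hslack : partialMoment s t + δ * ((t : ℝ) * (t + 1)) ≤ (t : ℝ) ^ 2 / 4) :
    Feasible ρ k (transfer s δ b t) := by
  obtain ⟨hnn, hsum, hzero, hcap⟩ := hs
  refine ⟨fun i hi => ?_, ?_, fun i hi hiρ => ?_, fun r hr => ?_⟩
  · have hsi := hnn i hi
    rw [transfer_apply]
    split_ifs <;> first | omega | (subst_vars; nlinarith)
  · rwa [sum_transfer s δ hb (by omega) (by omega) htk]
  · rw [transfer_apply, hzero i hi hiρ]
    split_ifs <;> first | omega | ring
  · change partialMoment _ r ≤ _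
    have : partialMoment s r ≤ (r : ℝ) ^ 2 / 4 := hcap r hr
    rw [partialMoment_transfer s δ hb (by omega)]
    split_ifs <;> first | omega | (subst_vars; nlinarith)

lemma phi_add_le_phi_transfer {ρ k b t : ℕ} (s : ℕ → ℝ) {δ : ℝ} (hb : b ∈ Icc ρ k)
    (ht : t ∈ Icc ρ k) (hb1 : 1 ≤ b) (hbt : b < t) (hδ : 0 ≤ δ)
    (hslack : partialMoment s t + δ * ((t : ℝ) * (t + 1)) ≤ (t : ℝ) ^ 2 / 4) :
    phi ρ k s + δ * ((t : ℝ) * (t + 1) - b * (b + 1)) ≤ phi ρ k (transfer s δ b t) := by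
  have hgain : ∑ r ∈ Icc ρ k, ((if r = t then (t : ℝ) * (t + 1) else 0)
      - if r = b then (b : ℝ) * (b + 1) else 0) = (t : ℝ) * (t + 1) - b * (b + 1) := by
    rw [sum_sub_distrib, sum_ite_eq', sum_ite_eq', if_pos ht, if_pos hb]
  rw [phi_eq_sum_min, phi_eq_sum_min, ← hgain, mul_sum, ← sum_add_distrib]
  refine sum_le_sum fun r _ => ?_
  rw [partialMoment_transfer s δ hb1 (by omega)]
  have hcap := min_le_left ((r : ℝ) ^ 2 / 4) (partialMoment s r)
  have hmoment := min_le_right ((r : ℝ) ^ 2 / 4) (partialMoment s r)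
  refine le_min ?_ (by linarith)
  split_ifs <;> first | omega | (subst_vars; nlinarith)

lemma exists_phi_lt_of_slack {ρ k b t : ℕ} {s : ℕ → ℝ} (hs : Feasible ρ k s) (hb : 1 ≤ b)
    (hρb : ρ ≤ b) (hbt : b < t) (htk : t + 1 ≤ k) (hsb : 0 < s b) (hst : 0 < s (t + 1))
    (hslack : partialMoment s t < (t : ℝ) ^ 2 / 4) :
    ∃ τ, Feasible ρ k τ ∧ phi ρ k s < phi ρ k τ := by
  have hb0 : (0 : ℝ) < b + 1 := by positivity
  have ht0 : (0 : ℝ) < t := by exact_mod_cast (by omega : 0 < t)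
  set δ := min (s b / (b + 1))
    (min (s (t + 1) / t) (((t : ℝ) ^ 2 / 4 - partialMoment s t) / (t * (t + 1))))
  have hδ : 0 < δ :=
    lt_min (by positivity) (lt_min (by positivity) (div_pos (by linarith) (by positivity)))
  have h₁ : ((b : ℝ) + 1) * δ ≤ s b := by
    rw [mul_comm, ← le_div_iff₀ hb0]; exact min_le_left _ _
  have h₂ : (t : ℝ) * δ ≤ s (t + 1) := by
    rw [mul_comm, ← le_div_iff₀ ht0]; exact (min_le_right _ _).trans (min_le_left _ _)
  have h₃ : partialMoment s t + δ * ((t : ℝ) * (t + 1)) ≤ (t : ℝ) ^ 2 / 4 := by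
    rw [← le_sub_iff_add_le', ← le_div_iff₀ (by positivity)]
    exact (min_le_right _ _).trans (min_le_right _ _)
  refine ⟨transfer s δ b t, hs.transfer hb hρb hbt htk hδ.le h₁ h₂ h₃, ?_⟩
  have hgain : (b : ℝ) * (b + 1) < t * (t + 1) := by
    have : (b : ℝ) + 1 ≤ t := by exact_mod_cast hbt
    nlinarith [(t.cast_nonneg : (0 : ℝ) ≤ t)]
  have := phi_add_le_phi_transfer s (k := k) (mem_Icc.2 ⟨hρb, by omega⟩)
    (mem_Icc.2 ⟨by omega, by omega⟩) hb hbt hδ.le h₃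
  nlinarith

lemma partialMoment_eq_of_isMax {ρ k b γ : ℕ} {s : ℕ → ℝ} (hs : Feasible ρ k s)
    (hmax : ∀ τ, Feasible ρ k τ → phi ρ k τ ≤ phi ρ k s) (hb : 1 ≤ b) (hρb : ρ ≤ b)
    (hγk : γ ≤ k) (hsb : 0 < s b) (hsγ : 0 < s γ) {t : ℕ} (hbt : b < t) (htγ : t < γ) :
    partialMoment s t = (t : ℝ) ^ 2 / 4 := by
  have tight_of_pos : ∀ {t}, b < t → t < γ → 0 < s (t + 1) →
      partialMoment s t = (t : ℝ) ^ 2 / 4 := fun {t} hbt htγ hst => by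
    refine (hs.2.2.2 t (mem_Icc.2 ⟨by omega, by omega⟩)).eq_of_not_lt fun hslack => ?_
    obtain ⟨τ, hτ, hlt⟩ := exists_phi_lt_of_slack hs hb hρb hbt (by omega) hsb hst hslack
    exact (hmax τ hτ).not_gt hlt
  obtain ⟨d, hd⟩ := Nat.exists_eq_add_of_lt htγ
  induction d generalizing t with
  | zero => exact tight_of_pos hbt htγ (by rwa [hd] at hsγ)
  | succ d ih =>
    refine tight_of_pos hbt htγ (pos_of_partialMoment_lt_succ ?_)
    have hcap : partialMoment s t ≤ (t : ℝ) ^ 2 / 4 := hs.2.2.2 t (mem_Icc.2 ⟨by omega, by omega⟩)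
    rw [ih (t := t + 1) (by omega) (by omega) (by omega)]
    push_cast
    nlinarith [(t.cast_nonneg : (0 : ℝ) ≤ t)]

lemma sum_Ioc_inv_le_log {a b : ℕ} (ha : 1 ≤ a) :
    ∑ i ∈ Ioc a b, (i : ℝ)⁻¹ ≤ Real.log b := by
  rcases Nat.eq_zero_or_pos b with rfl | hb
  · simp
  have hH : ∑ i ∈ Icc 1 b, (i : ℝ)⁻¹ ≤ 1 + Real.log b := by
    simpa [harmonic_eq_sum_Icc] using harmonic_le_one_add_log b
  rw [← sum_Ioc_add_eq_sum_Icc hb, Nat.cast_one, inv_one] at hH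
  have hsub : ∑ i ∈ Ioc a b, (i : ℝ)⁻¹ ≤ ∑ i ∈ Ioc 1 b, (i : ℝ)⁻¹ :=
    sum_le_sum_of_subset_of_nonneg (Ioc_subset_Ioc_left ha) fun _ _ _ => by positivity
  linarith

lemma sum_Ioc_ge_of_partialMoment_eq {s : ℕ → ℝ} {a b : ℕ} (ha : 1 ≤ a) (hab : a ≤ b)
    (htight : ∀ j ∈ Icc a b, partialMoment s j = (j : ℝ) ^ 2 / 4) :
    ((b : ℝ) - a) / 2 - Real.log b / 4 ≤ ∑ i ∈ Ioc a b, s i := by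
  have hvalue : ∀ i ∈ Ioc a b, s i = 1 / 2 - 1 / 4 * (i : ℝ)⁻¹ := fun i hi => by
    obtain ⟨hai, hib⟩ := mem_Ioc.1 hi
    obtain ⟨j, rfl⟩ := Nat.exists_eq_add_one_of_ne_zero (by omega : i ≠ 0)
    exact apply_succ_eq_of_partialMoment_eq (htight j (mem_Icc.2 ⟨by omega, by omega⟩))
      (htight (j + 1) (mem_Icc.2 ⟨hai.le, hib⟩))
  rw [sum_congr rfl hvalue, sum_sub_distrib, sum_const, Nat.card_Ioc, nsmul_eq_mul,
    Nat.cast_sub hab, ← mul_sum]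
  linarith [sum_Ioc_inv_le_log (b := b) ha]

lemma sum_Icc_add_sum_Ioc_le {s : ℕ → ℝ} {a b k : ℕ} (hab : a ≤ b) (hbk : b ≤ k)
    (hs : ∀ i ∈ Icc 1 k, 0 ≤ s i) :
    ∑ i ∈ Icc 1 a, s i + ∑ i ∈ Ioc a b, s i ≤ ∑ i ∈ Icc 1 k, s i := by
  have hIcc : ∀ m, Icc 1 m = Ioc 0 m := Icc_add_one_left_eq_Ioc 0
  rw [hIcc, hIcc, sum_Ioc_consecutive _ (Nat.zero_le a) hab]
  exact sum_le_sum_of_subset_of_nonneg (Ioc_subset_Ioc_right hbk) fun i hi _ =>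
    hs i (by rwa [hIcc])

theorem maximizer_beta_gamma_inequality_general (n ρ : ℕ) (σ : ℕ → ℝ)
    (hσ : Feasible ρ (n / 2) σ)
    (hmax : ∀ τ : ℕ → ℝ, Feasible ρ (n / 2) τ → phi ρ (n / 2) τ ≤ phi ρ (n / 2) σ)
    (β γ : ℕ) (hβmem : β ∈ Finset.Icc 1 (n / 2)) (hγmem : γ ∈ Finset.Icc 1 (n / 2))
    (hβ : σ β ≠ 0) (hγ : σ γ ≠ 0) :
    (β : ℝ) ≥ ((β : ℝ) + 1) / 4 + ((γ : ℝ) - (β : ℝ) - 2) / 2 - Real.log n / 4 := by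
  obtain ⟨hβ1, hβk⟩ := mem_Icc.1 hβmem
  obtain ⟨hγ1, hγk⟩ := mem_Icc.1 hγmem
  have hρβ : ρ ≤ β := not_lt.1 fun h => hβ (hσ.2.2.1 β hβmem h)
  have hβR : (1 : ℝ) ≤ β := by exact_mod_cast hβ1
  have hlog : 0 ≤ Real.log n := Real.log_natCast_nonneg n
  rcases le_or_gt γ (β + 2) with hγβ | hβγ
  · have : (γ : ℝ) ≤ β + 2 := by exact_mod_cast hγβ
    linarith
  have htight : ∀ j ∈ Icc (β + 1) (γ - 1), partialMoment σ j = (j : ℝ) ^ 2 / 4 := fun j hj =>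
    partialMoment_eq_of_isMax hσ hmax hβ1 hρβ hγk ((hσ.1 β hβmem).lt_of_ne' hβ)
      ((hσ.1 γ hγmem).lt_of_ne' hγ) (by grind) (by grind)
  have hhead : ((β : ℝ) + 1) / 4 ≤ ∑ i ∈ Icc 1 (β + 1), σ i := by
    have := partialMoment_le_mul_sum (s := σ) (r := β + 1) fun i hi => hσ.1 i (by grind)
    rw [htight (β + 1) (by grind)] at this
    push_cast at this
    nlinarith
  have htail := sum_Ioc_ge_of_partialMoment_eq (by omega) (by omega) htight
  have hlog_le : Real.log (γ - 1 : ℕ) ≤ Real.log n :=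
    Real.log_le_log (by exact_mod_cast (by omega : 0 < γ - 1))
      (by exact_mod_cast (by omega : γ - 1 ≤ n))
  have hsplit := sum_Icc_add_sum_Ioc_le (s := σ) (by omega : β + 1 ≤ γ - 1) (by omega) hσ.1
  have hρ : (ρ : ℝ) ≤ β := by exact_mod_cast hρβ
  rw [Nat.cast_sub (by omega : 1 ≤ γ)] at htail hlog_le
  push_cast at htail hlog_le
  linarith [hσ.2.1]

/-- Inequality (5) of the paper: at a nonzero maximizer `σ` of `φ` over the feasible set with
minimal and maximal nonzero indices `β` and `γ`,
`β ≥ (β+1)/4 + (γ-β-2)/2 - (ln n)/4`. -/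
theorem maximizer_beta_gamma_inequality (n ρ : ℕ) (hn : 0 < n) (hρ : 0 < ρ)
    (hρn : (ρ : ℝ) < (n : ℝ) / 2) (σ : ℕ → ℝ)
    (hσ : Feasible ρ (n / 2) σ)
    (hmax : ∀ τ : ℕ → ℝ, Feasible ρ (n / 2) τ → phi ρ (n / 2) τ ≤ phi ρ (n / 2) σ)
    (β γ : ℕ) (hβmem : β ∈ Finset.Icc 1 (n / 2)) (hγmem : γ ∈ Finset.Icc 1 (n / 2))
    (hβ : σ β ≠ 0) (hγ : σ γ ≠ 0)
    (hminmax : ∀ i ∈ Finset.Icc 1 (n / 2), σ i ≠ 0 → β ≤ i ∧ i ≤ γ) :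
    (β : ℝ) ≥ ((β : ℝ) + 1) / 4 + ((γ : ℝ) - (β : ℝ) - 2) / 2 - Real.log n / 4 :=
  maximizer_beta_gamma_inequality_general n ρ σ hσ hmax β γ hβmem hγmem hβ hγ
end

section
/- Let \(n\) and \(\rho<n/2\) be positive integers, \(k=\lfloor n/2\rfloor\), and let \(\sigma=(\sigma_{1},\ldots,\sigma_{k})\) be a nonzero maximizer of \(\varphi\) over the feasible set, with \(\beta\) and \(\gamma\) the minimal and maximal indices \(i\) with \(\sigma_{i}\ne0\). Then \(\varphi(\sigma) \le \psi(\beta,\gamma) := \frac{-2\beta^{3} - 4\gamma^{3} + 3\gamma^{2} n + 6\gamma^{2} + 6\gamma + 2}{24}\). -/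
lemma sum_sq_range (m : ℕ) :
    ∑ i ∈ Finset.range m, (i : ℝ) ^ 2 = (m : ℝ) * ((m : ℝ) - 1) * (2 * (m : ℝ) - 1) / 6 := by
  induction m with
  | zero => simp
  | succ m ih => rw [Finset.sum_range_succ, ih]; push_cast; ring

/-- At a nonzero maximizer `σ` of `φ` over the feasible set with minimal and maximal nonzero
indices `β` and `γ`, we have `φ(σ) ≤ ψ(β,γ) = (-2β³ - 4γ³ + 3γ²n + 6γ² + 6γ + 2)/24`. -/
theorem maximizer_phi_le_psi (n ρ : ℕ) (hn : 0 < n) (hρ : 0 < ρ)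
    (hρn : (ρ : ℝ) < (n : ℝ) / 2) (σ : ℕ → ℝ)
    (hσ : Feasible ρ (n / 2) σ)
    (hmax : ∀ τ : ℕ → ℝ, Feasible ρ (n / 2) τ → phi ρ (n / 2) τ ≤ phi ρ (n / 2) σ)
    (β γ : ℕ) (hβmem : β ∈ Finset.Icc 1 (n / 2)) (hγmem : γ ∈ Finset.Icc 1 (n / 2))
    (hβ : σ β ≠ 0) (hγ : σ γ ≠ 0)
    (hminmax : ∀ i ∈ Finset.Icc 1 (n / 2), σ i ≠ 0 → β ≤ i ∧ i ≤ γ) :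
    phi ρ (n / 2) σ ≤
      (-2 * (β : ℝ) ^ 3 - 4 * (γ : ℝ) ^ 3 + 3 * (γ : ℝ) ^ 2 * (n : ℝ) +
        6 * (γ : ℝ) ^ 2 + 6 * (γ : ℝ) + 2) / 24 := by
  obtain ⟨hnn, hsum, hzero, hfeas⟩ := hσ
  set k := n / 2 with hk
  obtain ⟨hβ1, hβk⟩ := Finset.mem_Icc.mp hβmem
  obtain ⟨hγ1, hγk⟩ := Finset.mem_Icc.mp hγmem
  have hβγ : β ≤ γ := (hminmax β hβmem hβ).2
  have hρβ : ρ ≤ β := by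
    by_contra h
    exact hβ (hzero β hβmem (lt_of_not_ge h))
  -- σ vanishes outside [β, γ]
  have hvan : ∀ i, 1 ≤ i → i ≤ k → (i < β ∨ γ < i) → σ i = 0 := by
    intro i h1 h2 h3
    by_contra h
    have := hminmax i (Finset.mem_Icc.mpr ⟨h1, h2⟩) h
    omega
  -- abbreviation for partial sums
  set S : ℕ → ℝ := fun r => ∑ i ∈ Finset.Icc 1 r, (i : ℝ) * σ i with hS
  have hS0 : ∀ r, r < β → S r = 0 := by
    intro r hr
    apply Finset.sum_eq_zero
    intro i hi
    obtain ⟨h1, h2⟩ := Finset.mem_Icc.mp hi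
    rw [hvan i h1 (by omega) (Or.inl (by omega)), mul_zero]
  have hSγ : ∀ r, γ ≤ r → r ≤ k → S r = S γ := by
    intro r h1 h2
    refine (Finset.sum_subset (Finset.Icc_subset_Icc_right h1) ?_).symm
    intro i hi hni
    obtain ⟨hi1, hi2⟩ := Finset.mem_Icc.mp hi
    have : γ < i := by
      by_contra h
      exact hni (Finset.mem_Icc.mpr ⟨hi1, by omega⟩)
    rw [hvan i hi1 (by omega) (Or.inr this), mul_zero]
  have hSγle : S γ ≤ (γ : ℝ) ^ 2 / 4 :=
    hfeas γ (Finset.mem_Icc.mpr ⟨le_trans hρβ hβγ, hγk⟩)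
  have hρk : ρ ≤ k := le_trans hρβ hβk
  -- rewrite phi as sum over Ico
  have hphi : phi ρ k σ = ∑ r ∈ Finset.Ico ρ (k + 1), min ((r : ℝ) ^ 2 / 4) (S r) := by
    rw [phi, Finset.Ico_add_one_right_eq_Icc]
  have hsplit : phi ρ k σ =
      (∑ r ∈ Finset.Ico ρ β, min ((r : ℝ) ^ 2 / 4) (S r)) +
      (∑ r ∈ Finset.Ico β (γ + 1), min ((r : ℝ) ^ 2 / 4) (S r)) +
      (∑ r ∈ Finset.Ico (γ + 1) (k + 1), min ((r : ℝ) ^ 2 / 4) (S r)) := by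
    rw [hphi, ← Finset.sum_Ico_consecutive _ hρβ (by omega : β ≤ k + 1),
      ← Finset.sum_Ico_consecutive _ (by omega : β ≤ γ + 1) (by omega : γ + 1 ≤ k + 1)]
    ring
  have h1 : (∑ r ∈ Finset.Ico ρ β, min ((r : ℝ) ^ 2 / 4) (S r)) ≤ 0 := by
    apply Finset.sum_nonpos
    intro r hr
    obtain ⟨-, hr2⟩ := Finset.mem_Ico.mp hr
    rw [hS0 r hr2]
    exact min_le_of_right_le le_rfl
  have h2 : (∑ r ∈ Finset.Ico β (γ + 1), min ((r : ℝ) ^ 2 / 4) (S r)) ≤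
      ∑ r ∈ Finset.Ico β (γ + 1), (r : ℝ) ^ 2 / 4 := by
    apply Finset.sum_le_sum
    intro r _
    exact min_le_left _ _
  have h3 : (∑ r ∈ Finset.Ico (γ + 1) (k + 1), min ((r : ℝ) ^ 2 / 4) (S r)) ≤
      ((k : ℝ) - (γ : ℝ)) * ((γ : ℝ) ^ 2 / 4) := by
    calc (∑ r ∈ Finset.Ico (γ + 1) (k + 1), min ((r : ℝ) ^ 2 / 4) (S r))
        ≤ ∑ r ∈ Finset.Ico (γ + 1) (k + 1), (γ : ℝ) ^ 2 / 4 := by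
          apply Finset.sum_le_sum
          intro r hr
          obtain ⟨hr1, hr2⟩ := Finset.mem_Ico.mp hr
          have := hSγ r (by omega) (by omega)
          rw [this] at *
          exact le_trans (min_le_right _ _) hSγle
      _ = ((k : ℝ) - (γ : ℝ)) * ((γ : ℝ) ^ 2 / 4) := by
          rw [Finset.sum_const, Nat.card_Ico, nsmul_eq_mul]
          congr 1
          have : k + 1 - (γ + 1) = k - γ := by omega
          rw [this, Nat.cast_sub hγk]
  have hsq : (∑ r ∈ Finset.Ico β (γ + 1), (r : ℝ) ^ 2 / 4) =
      (((γ : ℝ) + 1) * (γ : ℝ) * (2 * (γ : ℝ) + 1) -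
        (β : ℝ) * ((β : ℝ) - 1) * (2 * (β : ℝ) - 1)) / 24 := by
    rw [Finset.sum_Ico_eq_sub _ (by omega : β ≤ γ + 1), ← Finset.sum_div, ← Finset.sum_div,
      sum_sq_range, sum_sq_range]
    push_cast
    ring
  have hkn : (k : ℝ) ≤ (n : ℝ) / 2 := by
    rw [hk]
    exact_mod_cast Nat.cast_div_le
  have hγkR : (γ : ℝ) ≤ (k : ℝ) := by exact_mod_cast hγk
  have hβγR : (β : ℝ) ≤ (γ : ℝ) := by exact_mod_cast hβγ
  have hβ1R : (1 : ℝ) ≤ (β : ℝ) := by exact_mod_cast hβ1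
  have hγsq : (0 : ℝ) ≤ (γ : ℝ) ^ 2 / 4 := by positivity
  rw [hsplit]
  nlinarith [mul_le_mul_of_nonneg_right hkn hγsq,
    mul_nonneg (mul_nonneg (sub_nonneg.mpr hβγR) (by linarith : (0:ℝ) ≤ (γ:ℝ) + (β:ℝ)))
      (by norm_num : (0:ℝ) ≤ (3:ℝ))]
end

section
/- There exists an absolute constant \(C>0\) such that for every integer \(n\ge 2\) and all real numbers \(\beta,\gamma\) with \(0\le\beta\le\gamma\le n/2\) and \(\beta \ge \frac{\beta+1}{4} + \frac{\gamma-\beta-2}{2} - \frac{\ln n}{4}\), one has \(\psi(\beta,\gamma) := \frac{-2\beta^{3} - 4\gamma^{3} + 3\gamma^{2} n + 6\gamma^{2} + 6\gamma + 2}{24} \le \frac{15625\, n^{3}}{1597536} + C\, n^{2}\ln n\). -/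
set_option maxHeartbeats 1000000 in
/-- The final calculus step of the paper: there is an absolute constant `C > 0` such that for
every integer `n ≥ 2` and all reals `0 ≤ β ≤ γ ≤ n/2` satisfying
`β ≥ (β+1)/4 + (γ-β-2)/2 - (ln n)/4`, one has
`ψ(β,γ) = (-2β³ - 4γ³ + 3γ²n + 6γ² + 6γ + 2)/24 ≤ 15625 n³/1597536 + C n² ln n`. -/
theorem psi_max_bound :
    ∃ C : ℝ, 0 < C ∧
      ∀ n : ℕ, 2 ≤ n → ∀ β γ : ℝ,
        0 ≤ β → β ≤ γ → γ ≤ (n : ℝ) / 2 →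
        β ≥ (β + 1) / 4 + (γ - β - 2) / 2 - Real.log n / 4 →
        (-2 * β ^ 3 - 4 * γ ^ 3 + 3 * γ ^ 2 * (n : ℝ) + 6 * γ ^ 2 + 6 * γ + 2) / 24 ≤
          15625 * (n : ℝ) ^ 3 / 1597536 + C * (n : ℝ) ^ 2 * Real.log n := by
  refine ⟨100, by norm_num, ?_⟩
  intro n hn β γ hβ0 hβγ hγn hcon
  set L := Real.log n with hLdef
  have hn2 : (2:ℝ) ≤ (n:ℝ) := by exact_mod_cast hn
  have hL2 : Real.log 2 ≤ L := Real.log_le_log (by norm_num) hn2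
  have hlog2 : (0.6931471803:ℝ) < Real.log 2 := Real.log_two_gt_d9
  have hLlb : (0.6931471803:ℝ) ≤ L := by linarith
  have hLpos : (0:ℝ) < L := by linarith
  have hLn : L ≤ (n:ℝ) := by
    have := Real.log_le_sub_one_of_pos (show (0:ℝ) < (n:ℝ) by linarith)
    linarith
  have hγ0 : 0 ≤ γ := le_trans hβ0 hβγ
  have hn0 : (0:ℝ) ≤ (n:ℝ) := by linarith
  have hc : 5 * β ≥ 2 * γ - 3 - L := by linarith
  have hn3 : (0:ℝ) ≤ (n:ℝ) ^ 3 := pow_nonneg hn0 3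
  have hn2L : (0:ℝ) ≤ (n:ℝ)^2 * L := by positivity
  -- basic bounds
  have hγsq : γ ^ 2 ≤ (n:ℝ) ^ 2 / 4 := by nlinarith
  have h2 : (2:ℝ) ≤ (n:ℝ)^2 * L := by nlinarith
  have hLsq : L^2 ≤ (n:ℝ) * L := by nlinarith
  have hLn2 : (n:ℝ) * L ≤ (n:ℝ)^2 * L := by nlinarith
  have hL1 : L ≤ (n:ℝ)^2 * L := by nlinarith
  rcases le_or_gt (2 * γ - 3 - L) 0 with h | h
  · -- small γ case: γ ≤ (3+L)/2 ≤ 3L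
    have hβ3 : (0:ℝ) ≤ β ^ 3 := pow_nonneg hβ0 3
    have hγ3 : (0:ℝ) ≤ γ ^ 3 := pow_nonneg hγ0 3
    have hγ3L : γ ≤ 3 * L := by nlinarith
    have hγ2b : γ^2 ≤ 9 * L^2 := by nlinarith
    have ha1 : 3 * (n:ℝ) * γ^2 ≤ 27 * (n:ℝ) * L^2 := by nlinarith
    have ha2 : 27 * (n:ℝ) * L^2 ≤ 27 * (n:ℝ)^2 * L := by nlinarith
    have ha3 : 6 * γ^2 ≤ 54 * (n:ℝ)^2 * L := by nlinarith
    have ha4 : 6 * γ ≤ 18 * (n:ℝ)^2 * L := by nlinarith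
    linarith [hβ3, hγ3, ha1, ha2, ha3, ha4, h2, hn3, hn2L]
  · -- main case: β ≥ t := (2γ-3-L)/5 > 0
    have ht0 : (0:ℝ) ≤ (2*γ - 3 - L)/5 := by linarith
    have hβt : (2*γ - 3 - L)/5 ≤ β := by linarith
    have hβ3 : ((2*γ - 3 - L)/5)^3 ≤ β^3 := pow_le_pow_left₀ ht0 hβt 3
    -- key cubic inequality
    have hkey : 3*(n:ℝ)*γ^2 - (516/125)*γ^3 ≤ 15625*(n:ℝ)^3/66564 := by
      nlinarith [mul_nonneg (sq_nonneg (258*γ - 125*(n:ℝ)))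
        (show (0:ℝ) ≤ 516*γ + 125*(n:ℝ) by linarith)]
    -- error terms, with s = 3 + L ≤ 6L
    have hs6 : 3 + L ≤ 6 * L := by linarith
    have hs0 : (0:ℝ) ≤ 3 + L := by linarith
    have he1 : γ^2 * (3 + L) ≤ ((n:ℝ)^2/4) * (6*L) :=
      mul_le_mul hγsq hs6 hs0 (by positivity)
    have he2 : (3+L)^3 ≤ 216 * L^3 := by nlinarith [sq_nonneg L, sq_nonneg (3+L)]
    have he3 : L^3 ≤ (n:ℝ)^2 * L := by nlinarith [sq_nonneg L]
    have he4 : 0 ≤ γ * (3+L)^2 := mul_nonneg hγ0 (sq_nonneg _)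
    have hγn2 : 6 * γ ≤ 6 * (n:ℝ)^2 * L := by nlinarith
    have hγ2L : 6 * γ^2 ≤ 3 * (n:ℝ)^2 * L := by nlinarith
    linarith [hβ3, hkey, he1, he2, he3, he4, hγn2, hγ2L, h2, hn2L]
end
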